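/- arXiv:2401.11309 — 9 statements merged into one kernel-verified Lean document; each statement's English description precedes it below -/
import Mathlib

section
/- Let p be a prime, let d ≥ 2 be an integer, let a be a nonzero rational number, and let b = σ·p^e with σ ∈ {1, −1} and e a nonnegative integer. Then every rational periodic cycle of ψ_{d,a,b} on ℙ¹(ℚ) has length at most 2 (i.e., every point of ℙ¹(ℚ) that is periodic under ψ_{d,a,b} has exact period 1 or 2). -/
/-- The map `ψ_{d,a,b} : ℙ¹(ℚ) → ℙ¹(ℚ)`, with `ℙ¹(ℚ)` modeled as `Option ℚ`
(`some z` is the affine point `z`, and `none` is the point at infinity `[1 : 0]`).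
In homogeneous coordinates the map is `[X : Y] ↦ [X·Y^{d−1} : a·X^d + b·Y^d]`;
on the affine chart it is `z ↦ z / (a·z^d + b)`, the point at infinity mapping to `0`. -/
def psi (d : ℕ) (a b : ℚ) : Option ℚ → Option ℚ
  | none => some 0
  | some z => if a * z ^ d + b = 0 then none else some (z / (a * z ^ d + b))

/-!
Let `z₀, z₁, …` be a cycle of length at least `3`. It avoids `0`, which is fixed, and `∞`, which
maps to `0`, so `zᵢ₊₁ = zᵢ / Dᵢ` with `Dᵢ = Tᵢ + b` and `Tᵢ = a zᵢ ^ d`; for every prime,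
`v(Tᵢ₊₁) = v(Tᵢ) - d v(Dᵢ)`. At a prime `q ≠ p` we have `v_q(b) = 0`, so by the ultrametric
inequality `max (v_q(Tᵢ)) 0` is nondecreasing along the cycle, hence constant, and this forces
`v_q(Dᵢ) = 0`: every `Dᵢ` is `±p ^ kᵢ`.

At `p`, put `Yᵢ = v_p(Tᵢ)`. Except in one case, `Yᵢ = min kᵢ e`; then `|Yᵢ|` is nondecreasing,
hence constant, which gives `kᵢ = Yᵢ` and `(d - 2) Yᵢ = 0`. For `d ≥ 3` all `Dᵢ` are `±1` and the
cycle lies in `{z₀, -z₀}`. For `d = 2` we get `k₁ = -k₀`, so `D₀ D₁ = ±1`, and as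
`z₂ = z₀ / (D₀ D₁) ≠ z₀` it is `-1`; this unwinds to `b (D₀² - 1) = -2 D₀`, impossible with
`|D₀| = p ^ k` and `|b| = p ^ e`. The exceptional case is `p = 2` with some `kᵢ = e`: then every
`Tᵢ` is `±2 ^ Yᵢ`, and a sum of two signed powers of `2` is again one only in three ways. This
forces `kᵢ ∈ {e - 1, e}`, so `Yᵢ` is monotone, hence constant, and again all `Dᵢ = ±1`.
-/

open Function

theorem padicValRat_abs (p : ℕ) (x : ℚ) : padicValRat p |x| = padicValRat p x := by
  rcases abs_choice x with h | h <;> simp [h]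

theorem padicValRat_of_abs_eq_zpow {p : ℕ} [hp : Fact p.Prime] {x : ℚ} {k : ℤ}
    (hx : |x| = (p : ℚ) ^ k) : padicValRat p x = k := by
  rw [← padicValRat_abs, hx, padicValRat.zpow, padicValRat.self hp.out.one_lt, mul_one]

theorem Nat.eq_pow_padicValNat {p N : ℕ} [hp : Fact p.Prime] (hN : N ≠ 0)
    (h : ∀ q, q.Prime → q ≠ p → padicValNat q N = 0) : N = p ^ padicValNat p N := by
  refine Nat.eq_pow_of_factorization_eq_single hN (Finsupp.ext fun q => ?_)
  rw [Finsupp.single_apply]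
  split_ifs with hpq
  · rw [← hpq, Nat.factorization_def N hp.out]
  · by_cases hq : q.Prime
    · rw [Nat.factorization_def N hq, h q hq (Ne.symm hpq)]
    · exact Nat.factorization_eq_zero_of_not_prime N hq

theorem abs_eq_zpow_padicValRat {p : ℕ} [hp : Fact p.Prime] {x : ℚ} (hx : x ≠ 0)
    (h : ∀ q, q.Prime → q ≠ p → padicValRat q x = 0) :
    |x| = (p : ℚ) ^ padicValRat p x := by
  have hND : ∀ q, q.Prime → q ≠ p →
      padicValNat q x.num.natAbs = 0 ∧ padicValNat q x.den = 0 := by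
    intro q hq hqp
    have hx0 := h q hq hqp
    rw [padicValRat_def, padicValInt] at hx0
    have : padicValNat q x.num.natAbs = 0 ∨ padicValNat q x.den = 0 := by
      by_cases hdvd : q ∣ x.num.natAbs
      · exact .inr <| padicValNat.eq_zero_of_not_dvd fun hden =>
          hq.one_lt.ne' (Nat.eq_one_of_dvd_coprimes x.reduced hdvd hden)
      · exact .inl <| padicValNat.eq_zero_of_not_dvd hdvd
    omega
  have hnum := Nat.eq_pow_padicValNat (Int.natAbs_ne_zero.2 (Rat.num_ne_zero.2 hx))
    fun q hq hqp => (hND q hq hqp).1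
  have hden := Nat.eq_pow_padicValNat x.den_ne_zero fun q hq hqp => (hND q hq hqp).2
  rw [Rat.abs_def, Rat.divInt_eq_div, padicValRat_def, padicValInt,
    zpow_sub₀ (by exact_mod_cast hp.out.ne_zero)]
  conv_lhs => rw [hnum, hden]
  simp only [zpow_natCast, Nat.cast_pow, Int.cast_pow, Int.cast_natCast]

theorem padicValRat_eq_min_of_abs_eq_zpow {p : ℕ} [hp : Fact p.Prime] {x y : ℚ} {e : ℕ}
    (hx : x ≠ 0) (hy : |y| = (p : ℚ) ^ e)
    (hxy : |x + y| = (p : ℚ) ^ padicValRat p (x + y)) (h2 : padicValRat p (x + y) = e → p ≠ 2) :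
    padicValRat p x = min (padicValRat p (x + y)) e := by
  have hp0 : (0 : ℚ) < p := by exact_mod_cast hp.out.pos
  have hy0 : y ≠ 0 := abs_pos.mp (hy ▸ pow_pos hp0 e)
  have hxy0 : x + y ≠ 0 := abs_pos.mp (hxy ▸ zpow_pos hp0 _)
  have hy' : padicValRat p y = e := padicValRat_of_abs_eq_zpow (by rw [hy, zpow_natCast])
  by_cases hk : padicValRat p (x + y) = e
  · have hx2 : x = -2 * y := by
      rcases abs_eq_abs.mp (show |x + y| = |y| by rw [hxy, hk, hy, zpow_natCast]) with h | h
      · exact absurd (by linarith) hx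
      · linarith
    have hv2 : padicValRat p (-2) = 0 := by
      rw [padicValRat.neg, show (2 : ℚ) = (2 : ℕ) by norm_num, padicValRat.of_nat,
        padicValNat_primes (h2 hk), Nat.cast_zero]
    rw [hk, min_self, hx2, padicValRat.mul (by norm_num) hy0, hv2, hy', zero_add]
  · have := padicValRat.add_eq_min (p := p) (by simpa using hx) hxy0 (neg_ne_zero.mpr hy0)
      (by rwa [padicValRat.neg, hy'])
    rwa [add_neg_cancel_right, padicValRat.neg, hy'] at this

theorem eq_add_one_of_abs_add_eq_two_zpow_of_lt {x y : ℚ} {X E K : ℤ} (hx : |x| = 2 ^ X)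
    (hy : |y| = 2 ^ E) (hxy : |x + y| = 2 ^ K) (hlt : X < E) : E = X + 1 ∧ K = X := by
  have hv (w : ℚ) (m : ℤ) (h : |w| = 2 ^ m) : padicValRat 2 w = m :=
    padicValRat_of_abs_eq_zpow (p := 2) (by rw [h, Nat.cast_ofNat])
  have hne (w : ℚ) (m : ℤ) (h : |w| = 2 ^ m) : w ≠ 0 := by
    rintro rfl
    exact (zpow_pos two_pos m).ne (by rwa [abs_zero] at h)
  have hK : K = X := by
    rw [← hv _ _ hxy, padicValRat.add_eq_min (hne _ _ hxy) (hne _ _ hx) (hne _ _ hy)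
      (by rw [hv _ _ hx, hv _ _ hy]; exact hlt.ne), hv _ _ hx, hv _ _ hy, min_eq_left hlt.le]
  subst hK
  have hy2 : y = -2 * x := by
    rcases abs_eq_abs.mp (hxy.trans hx.symm) with h | h
    · exact absurd (by linarith) (hne _ _ hy)
    · linarith
  refine ⟨zpow_right_injective₀ (two_pos : (0 : ℚ) < 2) (by norm_num) ?_, rfl⟩
  show (2 : ℚ) ^ E = 2 ^ (K + 1)
  rw [← hy, hy2, abs_mul, hx, zpow_add_one₀ two_ne_zero]
  norm_num [mul_comm]

theorem abs_add_eq_two_zpow_cases {x y : ℚ} {X E K : ℤ} (hx : |x| = 2 ^ X)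
    (hy : |y| = 2 ^ E) (hxy : |x + y| = 2 ^ K) :
    (X = E ∧ K = E + 1) ∨ (X = E - 1 ∧ K = E - 1) ∨ (X = E + 1 ∧ K = E) := by
  rcases lt_trichotomy X E with hlt | rfl | hgt
  · obtain ⟨rfl, rfl⟩ := eq_add_one_of_abs_add_eq_two_zpow_of_lt hx hy hxy hlt
    omega
  · rcases abs_eq_abs.mp (hx.trans hy.symm) with rfl | rfl
    · refine .inl ⟨rfl, zpow_right_injective₀ (two_pos : (0 : ℚ) < 2) (by norm_num) ?_⟩
      show (2 : ℚ) ^ K = 2 ^ (X + 1)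
      rw [← hxy, ← two_mul, abs_mul, hx, zpow_add_one₀ two_ne_zero]
      norm_num [mul_comm]
    · rw [neg_add_cancel, abs_zero] at hxy
      exact absurd hxy.symm (zpow_ne_zero _ two_ne_zero)
  · rw [add_comm] at hxy
    obtain ⟨rfl, rfl⟩ := eq_add_one_of_abs_add_eq_two_zpow_of_lt hy hx hxy hgt
    omega

theorem Nat.mul_sq_ne_two_mul_add {x y : ℕ} (hy : 0 < y) : y * x ^ 2 ≠ 2 * x + y := by
  intro h
  rcases Nat.lt_or_ge x 3 with hx | hx
  · interval_cases x <;> omega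
  · have h' : (y : ℤ) * x ^ 2 = 2 * x + y := by exact_mod_cast h
    have hx' : (3 : ℤ) ≤ x := by exact_mod_cast hx
    nlinarith [mul_nonneg (sub_nonneg.2 (show (1 : ℤ) ≤ y by exact_mod_cast hy))
      (show (0 : ℤ) ≤ x ^ 2 - 1 by nlinarith)]

theorem abs_mul_abs_sq_sub_one_ne {p e : ℕ} {k : ℤ} {b D : ℚ} (hp : 0 < p)
    (hb : |b| = (p : ℚ) ^ e) (hD : |D| = (p : ℚ) ^ k) : |b| * |D ^ 2 - 1| ≠ 2 * |D| := by
  intro h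
  -- the equation is invariant under `|D| ↦ |D|⁻¹`, so both signs of `k` lead to `X = p ^ |k|`
  have hX : (1 : ℚ) ≤ ((p ^ k.natAbs : ℕ) : ℚ) := by exact_mod_cast Nat.one_le_pow _ _ hp
  have key : (p ^ e : ℚ) * (((p ^ k.natAbs : ℕ) : ℚ) ^ 2 - 1) = 2 * (p ^ k.natAbs : ℕ) := by
    rw [← sq_abs D, hD, hb] at h
    push_cast at hX ⊢
    rcases k.natAbs_eq with hk | hk <;> rw [hk] at h
    · rwa [zpow_natCast, abs_of_nonneg (by nlinarith)] at h
    · rw [zpow_neg, zpow_natCast, inv_pow, abs_sub_comm,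
        abs_of_nonneg (by rw [sub_nonneg]; exact inv_le_one_of_one_le₀ (one_le_pow₀ hX))] at h
      field_simp at h
      linear_combination h
  exact Nat.mul_sq_ne_two_mul_add (x := p ^ k.natAbs) (pow_pos hp e) (by
    exact_mod_cast (show (p : ℚ) ^ e * ((p ^ k.natAbs : ℕ) : ℚ) ^ 2
      = 2 * ((p ^ k.natAbs : ℕ) : ℚ) + (p : ℚ) ^ e by linarith))

theorem Monotone.eq_of_periodic {α : Type*} [PartialOrder α] {f : ℕ → α} {n : ℕ}
    (hf : Monotone f) (hper : Periodic f n) (hn : 0 < n) (i : ℕ) : f (i + 1) = f i :=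
  le_antisymm ((hf (by omega : i + 1 ≤ i + n)).trans_eq (hper i)) (hf i.le_succ)

theorem Antitone.eq_of_periodic {α : Type*} [PartialOrder α] {f : ℕ → α} {n : ℕ}
    (hf : Antitone f) (hper : Periodic f n) (hn : 0 < n) (i : ℕ) : f (i + 1) = f i :=
  le_antisymm (hf i.le_succ) ((hper i).symm.trans_le (hf (by omega : i + 1 ≤ i + n)))

section IntegerDynamics

variable {d : ℤ} {n : ℕ} {Y k : ℕ → ℤ}

theorem eq_zero_of_periodic_of_eq_min_zero (hd : 2 ≤ d) (hn : 0 < n) (hY : Periodic Y n)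
    (hrec : ∀ i, Y (i + 1) = Y i - d * k i) (hle : ∀ i, min (Y i) 0 ≤ k i)
    (heq : ∀ i, Y i ≠ 0 → k i = min (Y i) 0) (i : ℕ) : k i = 0 := by
  have hmono : Monotone fun i => max (Y i) 0 := by
    refine monotone_nat_of_le_succ fun i => max_le ?_ (le_max_right _ _)
    by_cases h : Y i ≤ 0
    · exact h.trans (le_max_right _ _)
    · have hk : k i = 0 := by rw [heq i (by omega), min_eq_right (by omega)]
      rw [hrec i, hk]
      simp
  have hconst := hmono.eq_of_periodic (hY.comp (max · 0)) hn
  have hnonneg : ∀ i, 0 ≤ Y i := by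
    intro i
    by_contra! h
    have hk : k i = Y i := by rw [heq i h.ne, min_eq_left h.le]
    have := hconst i
    simp only [hrec i, hk, max_eq_right h.le] at this
    nlinarith [max_eq_right_iff.mp this]
  rcases (hnonneg i).lt_or_eq with h | h
  · rw [heq i h.ne', min_eq_right h.le]
  · have h1 := hle i
    have h2 := hnonneg (i + 1)
    rw [← h, min_self] at h1
    rw [hrec i, ← h] at h2
    nlinarith

theorem eq_and_mul_eq_zero_of_periodic_of_eq_min (hd : 2 ≤ d) (hn : 0 < n) (hY : Periodic Y n)
    (hrec : ∀ i, Y (i + 1) = Y i - d * k i) {e : ℤ} (he : 0 ≤ e)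
    (hmin : ∀ i, Y i = min (k i) e) (i : ℕ) : k i = Y i ∧ (d - 2) * Y i = 0 := by
  have hgrow : ∀ i, (d - 1) * |Y i| ≤ |Y (i + 1)| ∧ (e < k i → (d - 1) * |Y i| < |Y (i + 1)|) := by
    intro i
    rcases le_or_gt (k i) e with hk | hk
    · have hYk : Y i = k i := by rw [hmin i, min_eq_left hk]
      refine ⟨?_, fun h => absurd h hk.not_gt⟩
      rw [hrec i, ← hYk, show Y i - d * Y i = (1 - d) * Y i by ring, abs_mul,
        abs_of_nonpos (by omega : 1 - d ≤ 0)]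
      linarith
    · have hYe : Y i = e := by rw [hmin i, min_eq_right hk.le]
      have hlt : (d - 1) * |Y i| < |Y (i + 1)| := by
        rw [hrec i, hYe, abs_of_nonneg he, abs_of_neg (by nlinarith)]
        nlinarith
      exact ⟨hlt.le, fun _ => hlt⟩
  have hmono : Monotone fun i => |Y i| := monotone_nat_of_le_succ fun i => by
    nlinarith [(hgrow i).1, abs_nonneg (Y i)]
  have hconst := hmono.eq_of_periodic (hY.comp abs) hn i
  have hk : k i ≤ e := by
    by_contra! h
    nlinarith [(hgrow i).2 h, abs_nonneg (Y i)]
  have hYk : Y i = k i := by rw [hmin i, min_eq_left hk]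
  refine ⟨hYk.symm, ?_⟩
  have h := (hgrow i).1
  rw [show |Y (i + 1)| = |Y i| from hconst] at h
  rcases eq_or_ne (Y i) 0 with h0 | h0
  · simp [h0]
  · have : d - 2 = 0 := by nlinarith [abs_pos.mpr h0]
    simp [this]

theorem eq_zero_of_periodic_of_cases (hd : 2 ≤ d) (hn : 0 < n) (hY : Periodic Y n)
    (hrec : ∀ i, Y (i + 1) = Y i - d * k i) {e : ℤ} (he : 0 ≤ e)
    (hcases : ∀ i, (Y i = e ∧ k i = e + 1) ∨ (Y i = e - 1 ∧ k i = e - 1) ∨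
      (Y i = e + 1 ∧ k i = e)) (i : ℕ) : k i = 0 := by
  have hge : ∀ i, e - 1 ≤ Y i := fun i => by rcases hcases i with h | h | h <;> omega
  have hk : ∀ i, k i = e - 1 ∨ k i = e := by
    intro i
    rcases hcases i with ⟨hYi, hki⟩ | h | h
    · have := hge (i + 1)
      rw [hrec i, hYi, hki] at this
      nlinarith
    · exact .inl h.2
    · exact .inr h.2
  have hconst : Y (i + 1) = Y i := by
    rcases he.eq_or_lt with rfl | he
    · refine (monotone_nat_of_le_succ fun j => ?_).eq_of_periodic hY hn i
      rcases hk j with h | h <;> rw [hrec j, h] <;> nlinarith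
    · refine (antitone_nat_of_succ_le fun j => ?_).eq_of_periodic hY hn i
      rcases hk j with h | h <;> rw [hrec j, h] <;> nlinarith
  rw [hrec i] at hconst
  rcases mul_eq_zero.mp (show d * k i = 0 by linarith) with h | h
  · omega
  · exact h

end IntegerDynamics

/-- An orbit of `ψ_{d,a,b}` inside `ℚˣ`. Since `z (i + 1) ≠ 0`, the denominator in `succ` never
vanishes, so the junk value of `/ 0` plays no role. -/
structure PsiOrbit (d : ℕ) (a b : ℚ) (z : ℕ → ℚ) : Prop where
  ne_zero : ∀ i, z i ≠ 0
  succ : ∀ i, z (i + 1) = z i / (a * z i ^ d + b)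

namespace PsiOrbit

variable {d : ℕ} {a b : ℚ} {z : ℕ → ℚ}

theorem denom_ne_zero (hz : PsiOrbit d a b z) (i : ℕ) : a * z i ^ d + b ≠ 0 := fun h =>
  hz.ne_zero (i + 1) (by rw [hz.succ i, h, div_zero])

theorem term_ne_zero (hz : PsiOrbit d a b z) (ha : a ≠ 0) (i : ℕ) : a * z i ^ d ≠ 0 :=
  mul_ne_zero ha (pow_ne_zero _ (hz.ne_zero i))

theorem term_succ (hz : PsiOrbit d a b z) (i : ℕ) :
    a * z (i + 1) ^ d = a * z i ^ d / (a * z i ^ d + b) ^ d := by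
  rw [hz.succ i, div_pow, mul_div_assoc]

theorem padicValRat_term_succ (hz : PsiOrbit d a b z) (ha : a ≠ 0) (q : ℕ) [Fact q.Prime]
    (i : ℕ) : padicValRat q (a * z (i + 1) ^ d) =
      padicValRat q (a * z i ^ d) - d * padicValRat q (a * z i ^ d + b) := by
  rw [hz.term_succ, padicValRat.div (hz.term_ne_zero ha i) (pow_ne_zero _ (hz.denom_ne_zero i)), padicValRat.pow]

theorem padicValRat_denom_eq_zero (hz : PsiOrbit d a b z) (hd : 2 ≤ d) (ha : a ≠ 0) {n : ℕ}
    (hper : Periodic z n) (hn : 0 < n) {q : ℕ} [Fact q.Prime] (hb0 : b ≠ 0)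
    (hb : padicValRat q b = 0) (i : ℕ) : padicValRat q (a * z i ^ d + b) = 0 := by
  refine eq_zero_of_periodic_of_eq_min_zero (d := d)
    (Y := fun i => padicValRat q (a * z i ^ d)) (by exact_mod_cast hd) hn
    (hper.comp fun w => padicValRat q (a * w ^ d)) (hz.padicValRat_term_succ ha q)
    (fun i => ?_) (fun i h => ?_) i
  · simpa [hb] using padicValRat.min_le_padicValRat_add (p := q) (hz.denom_ne_zero i)
  · rw [padicValRat.add_eq_min (hz.denom_ne_zero i) (hz.term_ne_zero ha i) hb0 (by rwa [hb]), hb]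

theorem abs_denom_eq_zpow (hz : PsiOrbit d a b z) (hd : 2 ≤ d) (ha : a ≠ 0) {n : ℕ}
    (hper : Periodic z n) (hn : 0 < n) {p e : ℕ} [hp : Fact p.Prime] (hb : |b| = (p : ℚ) ^ e)
    (i : ℕ) : |a * z i ^ d + b| = (p : ℚ) ^ padicValRat p (a * z i ^ d + b) := by
  have hb0 : b ≠ 0 := abs_pos.mp (hb ▸ pow_pos (by exact_mod_cast hp.out.pos) e)
  refine abs_eq_zpow_padicValRat (hz.denom_ne_zero i) fun q hq hqp => ?_
  have : Fact q.Prime := ⟨hq⟩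
  refine hz.padicValRat_denom_eq_zero hd ha hper hn hb0 ?_ i
  rw [← padicValRat_abs, hb, padicValRat.pow, padicValRat.of_nat, padicValNat_primes hqp,
    Nat.cast_zero, mul_zero]

theorem abs_term_eq_zpow (hz : PsiOrbit d a b z) (ha : a ≠ 0) {p : ℕ} [hp : Fact p.Prime]
    (hD : ∀ i, |a * z i ^ d + b| = (p : ℚ) ^ padicValRat p (a * z i ^ d + b)) {i₀ : ℕ}
    (h₀ : |a * z i₀ ^ d| = (p : ℚ) ^ padicValRat p (a * z i₀ ^ d)) (i : ℕ) :
    |a * z i ^ d| = (p : ℚ) ^ padicValRat p (a * z i ^ d) := by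
  have hp0 : (p : ℚ) ≠ 0 := by exact_mod_cast hp.out.ne_zero
  set r : ℕ → ℚ := fun i => |a * z i ^ d| / (p : ℚ) ^ padicValRat p (a * z i ^ d)
  have hr : ∀ i, r i = r 0 := by
    intro i
    induction i with
    | zero => rfl
    | succ i ih =>
      rw [← ih]
      simp only [r]
      rw [hz.padicValRat_term_succ ha, hz.term_succ, abs_div, abs_pow, hD, zpow_sub₀ hp0,
        mul_comm (d : ℤ), zpow_mul, zpow_natCast]
      field_simp
  have h1 : r i₀ = 1 := by simp only [r]; rw [h₀, div_self (zpow_ne_zero _ hp0)]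
  have h2 : r i = 1 := (hr i).trans ((hr i₀).symm.trans h1)
  simp only [r] at h2
  rwa [div_eq_one_iff_eq (zpow_ne_zero _ hp0)] at h2

theorem false_of_abs_denom_eq_one (hz : PsiOrbit d a b z) (h0 : |a * z 0 ^ d + b| = 1)
    (h1 : |a * z 1 ^ d + b| = 1) (h01 : z 0 ≠ z 1) (h12 : z 1 ≠ z 2) (h02 : z 0 ≠ z 2) :
    False := by
  have hz1 := hz.succ 0
  have hz2 := hz.succ 1
  rcases abs_eq zero_le_one |>.mp h0 with h0 | h0 <;>
    rcases abs_eq zero_le_one |>.mp h1 with h1 | h1 <;>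
    simp only [zero_add, h0, h1, div_one, div_neg] at hz1 hz2
  · exact h01 hz1.symm
  · exact h01 hz1.symm
  · exact h12 hz2.symm
  · exact h02 (by rw [hz2, hz1, neg_neg])

theorem sq_denom_eq (hz : PsiOrbit 2 a b z)
    (h : |(a * z 0 ^ 2 + b) * (a * z 1 ^ 2 + b)| = 1) (h02 : z 0 ≠ z 2) :
    b * ((a * z 0 ^ 2 + b) ^ 2 - 1) = -2 * (a * z 0 ^ 2 + b) := by
  have hD0 := hz.denom_ne_zero 0
  have hz2 : z 2 = z 0 / ((a * z 0 ^ 2 + b) * (a * z 1 ^ 2 + b)) := by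
    rw [hz.succ 1, hz.succ 0, div_div]
  have hprod : (a * z 0 ^ 2 + b) * (a * z 1 ^ 2 + b) = -1 := by
    rcases abs_eq zero_le_one |>.mp h with h | h
    · exact absurd (by rw [hz2, h, div_one]) h02
    · exact h
  rw [hz.succ 0] at hprod
  field_simp at hprod
  linear_combination hprod

theorem padicValRat_denom_eq_zero_of_two (hz : PsiOrbit d a b z) (hd : 2 ≤ d) (ha : a ≠ 0)
    {n : ℕ} (hper : Periodic z n) (hn : 0 < n) {e : ℕ} (hb : |b| = 2 ^ e)
    (h₀ : ∃ i₀, padicValRat 2 (a * z i₀ ^ d + b) = e) (i : ℕ) :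
    padicValRat 2 (a * z i ^ d + b) = 0 := by
  obtain ⟨i₀, hi₀⟩ := h₀
  have hb' : |b| = ((2 : ℕ) : ℚ) ^ e := by rw [hb, Nat.cast_ofNat]
  have hD := hz.abs_denom_eq_zpow hd ha hper hn hb'
  have hT₀ : |a * z i₀ ^ d| = ((2 : ℕ) : ℚ) ^ padicValRat 2 (a * z i₀ ^ d) := by
    have hsum : a * z i₀ ^ d + b = -b := by
      rcases abs_eq_abs.mp (show |a * z i₀ ^ d + b| = |b| by rw [hD, hi₀, hb', zpow_natCast])
        with h | h
      · exact absurd (by linarith) (hz.term_ne_zero ha i₀)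
      · exact h
    have habs : |a * z i₀ ^ d| = ((2 : ℕ) : ℚ) ^ ((e : ℤ) + 1) := by
      rw [show a * z i₀ ^ d = -2 * b by linarith, abs_mul, abs_neg, abs_two, hb',
        zpow_add_one₀ (by norm_num), zpow_natCast, mul_comm, Nat.cast_ofNat]
    rw [habs, padicValRat_of_abs_eq_zpow habs]
  have hTall := hz.abs_term_eq_zpow ha hD hT₀
  simp only [Nat.cast_ofNat] at hD hTall
  exact eq_zero_of_periodic_of_cases (d := d) (Y := fun i => padicValRat 2 (a * z i ^ d))
    (by exact_mod_cast hd) hn (hper.comp fun w => padicValRat 2 (a * w ^ d))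
    (hz.padicValRat_term_succ ha 2) (Int.natCast_nonneg e)
    (fun i => abs_add_eq_two_zpow_cases (hTall i) (by rw [hb, zpow_natCast]) (hD i)) i

theorem padicValRat_denom_eq_padicValRat_term (hz : PsiOrbit d a b z) (hd : 2 ≤ d) (ha : a ≠ 0)
    {n : ℕ} (hper : Periodic z n) (hn : 0 < n) {p e : ℕ} [Fact p.Prime]
    (hb : |b| = (p : ℚ) ^ e) (h₂ : ∀ i, padicValRat p (a * z i ^ d + b) = e → p ≠ 2) (i : ℕ) :
    padicValRat p (a * z i ^ d + b) = padicValRat p (a * z i ^ d) ∧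
      ((d : ℤ) - 2) * padicValRat p (a * z i ^ d) = 0 :=
  eq_and_mul_eq_zero_of_periodic_of_eq_min (Y := fun i => padicValRat p (a * z i ^ d))
    (by exact_mod_cast hd) hn (hper.comp fun w => padicValRat p (a * w ^ d))
    (hz.padicValRat_term_succ ha p) (Int.natCast_nonneg e)
    (fun i => padicValRat_eq_min_of_abs_eq_zpow (hz.term_ne_zero ha i) hb (hz.abs_denom_eq_zpow hd ha hper hn hb i) (h₂ i)) i

theorem false_of_periodic (hz : PsiOrbit d a b z) {p e : ℕ} (hp : p.Prime) (hd : 2 ≤ d)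
    (ha : a ≠ 0) (hb : |b| = (p : ℚ) ^ e) {n : ℕ} (hper : Periodic z n) (hn : 0 < n)
    (h01 : z 0 ≠ z 1) (h12 : z 1 ≠ z 2) (h02 : z 0 ≠ z 2) : False := by
  have : Fact p.Prime := ⟨hp⟩
  have hD := hz.abs_denom_eq_zpow hd ha hper hn hb
  have hunit (h0 : padicValRat p (a * z 0 ^ d + b) = 0)
      (h1 : padicValRat p (a * z 1 ^ d + b) = 0) : False :=
    hz.false_of_abs_denom_eq_one (by rw [hD, h0, zpow_zero]) (by rw [hD, h1, zpow_zero])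
      h01 h12 h02
  by_cases h₂ : p = 2 ∧ ∃ i₀, padicValRat p (a * z i₀ ^ d + b) = e
  · obtain ⟨rfl, h₀⟩ := h₂
    have hk := hz.padicValRat_denom_eq_zero_of_two hd ha hper hn (by simpa using hb) h₀
    exact hunit (hk 0) (hk 1)
  have hk := hz.padicValRat_denom_eq_padicValRat_term hd ha hper hn hb
    fun i hi hp2 => h₂ ⟨hp2, i, hi⟩
  have hrec := hz.padicValRat_term_succ ha p 0
  rcases hd.eq_or_lt with rfl | hd3
  · have hk1 : padicValRat p (a * z 1 ^ 2 + b) = -padicValRat p (a * z 0 ^ 2 + b) := by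
      rw [(hk 1).1, (hk 0).1, hrec, ← (hk 0).1]
      ring
    have h := hz.sq_denom_eq (by
      rw [abs_mul, hD, hD, ← zpow_add₀ (by exact_mod_cast hp.ne_zero), hk1, add_neg_cancel,
        zpow_zero]) h02
    apply abs_mul_abs_sq_sub_one_ne hp.pos hb (hD 0)
    rw [← abs_mul, h, abs_mul, abs_neg, abs_two]
  · have hY (i : ℕ) : padicValRat p (a * z i ^ d) = 0 := by
      rcases mul_eq_zero.mp (hk i).2 with h | h
      · omega
      · exact h
    exact hunit (by rw [(hk 0).1, hY]) (by rw [(hk 1).1, hY])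

end PsiOrbit

theorem exists_psiOrbit {d : ℕ} {a b : ℚ} (hd : d ≠ 0) (hb : b ≠ 0) {P : Option ℚ}
    (hP : P ∈ periodicPts (psi d a b)) (h1 : minimalPeriod (psi d a b) P ≠ 1) :
    ∃ z, PsiOrbit d a b z ∧ ∀ i, (psi d a b)^[i] P = some (z i) := by
  have hfix : IsFixedPt (psi d a b) (some 0) := by simp [IsFixedPt, psi, hd, hb]
  have hne0 (i : ℕ) : (psi d a b)^[i] P ≠ some 0 := fun h => h1 <| by
    rw [← minimalPeriod_apply_iterate hP i, h, minimalPeriod_eq_one_iff_isFixedPt]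
    exact hfix
  have hne_none (i : ℕ) : (psi d a b)^[i] P ≠ none := fun h =>
    hne0 (i + 1) (by rw [iterate_succ_apply', h]; rfl)
  choose z hz using fun i => Option.ne_none_iff_exists'.mp (hne_none i)
  refine ⟨z, ⟨fun i h => hne0 i (by rw [hz i, h]), fun i => ?_⟩, hz⟩
  have h := hz (i + 1)
  rw [iterate_succ_apply', hz i] at h
  simp only [psi] at h
  split_ifs at h
  exact (Option.some.inj h).symm

/-- Let `p` be a prime, `d ≥ 2`, `a` a nonzero rational, and
`b = σ·p^e` with `σ ∈ {1,−1}` and `e ≥ 0`. Then every rational periodic point of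
`ψ_{d,a,b}` has exact period (minimal period) `1` or `2`, i.e. every rational
periodic cycle has length at most `2`. -/
theorem periodic_cycle_length_le_two
    (p : ℕ) (hp : p.Prime) (d : ℕ) (hd : 2 ≤ d) (a : ℚ) (ha : a ≠ 0)
    (σ : ℚ) (hσ : σ = 1 ∨ σ = -1) (e : ℕ) (b : ℚ) (hb : b = σ * (p : ℚ) ^ e)
    (P : Option ℚ) (hP : ∃ n : ℕ, 0 < n ∧ (psi d a b)^[n] P = P) :
    Function.minimalPeriod (psi d a b) P = 1 ∨
      Function.minimalPeriod (psi d a b) P = 2 := by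
  obtain ⟨n₀, hn₀, hPn₀⟩ := hP
  have hPer : P ∈ periodicPts (psi d a b) := ⟨n₀, hn₀, hPn₀⟩
  have hn := minimalPeriod_pos_of_mem_periodicPts hPer
  by_contra! h
  have hbabs : |b| = (p : ℚ) ^ e := by
    rcases hσ with rfl | rfl <;> simp [hb]
  have hb0 : b ≠ 0 := abs_pos.mp (hbabs ▸ pow_pos (by exact_mod_cast hp.pos) e)
  obtain ⟨z, hz, hzP⟩ := exists_psiOrbit (by omega) hb0 hPer h.1
  have hper : Periodic z (minimalPeriod (psi d a b) P) := fun i => Option.some.inj <| by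
    rw [← hzP, ← hzP, iterate_add_apply, iterate_minimalPeriod]
  have hinj {i j : ℕ} (hij : i < j) (hj : j ≤ 2) : z i ≠ z j := fun h' =>
    hij.ne (iterate_injOn_Iio_minimalPeriod (f := psi d a b) (x := P) (Set.mem_Iio.2 (by omega))
      (Set.mem_Iio.2 (by omega)) (by simp only [hzP, h']))
  exact hz.false_of_periodic hp hd ha hbabs hper hn (hinj one_pos one_le_two)
    (hinj one_lt_two le_rfl) (hinj two_pos le_rfl)
end

section
/- Fix an integer d ≥ 2. For every n ≥ 1, the following identities hold in ℤ[a,b][X,Y]: X·F̃_{n−1}(a·X^d + b·Y^d, Y^d) = Y·F_n(X,Y) and G̃_{n−1}(a·X^d + b·Y^d, Y^d) = G_n(X,Y). -/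
open MvPolynomial

/-- The polynomial ring `ℤ[a,b][X,Y]`, with variables `0 ↦ a`, `1 ↦ b`, `2 ↦ X`, `3 ↦ Y`. -/
abbrev R4 : Type := MvPolynomial (Fin 4) ℤ

/-- The pair `(F_n, G_n)` in `ℤ[a,b][X,Y]`: `F_0 = X`, `G_0 = Y`,
`F_n = F_{n−1}·G_{n−1}^{d−1}`, `G_n = a·F_{n−1}^d + b·G_{n−1}^d`. -/
noncomputable def FG (d : ℕ) : ℕ → R4 × R4
  | 0 => (X 2, X 3)
  | n + 1 => ((FG d n).1 * (FG d n).2 ^ (d - 1),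
      X 0 * (FG d n).1 ^ d + X 1 * (FG d n).2 ^ d)

/-- The pair `(F̃_n/y, G̃_n)` in `ℤ[b][x,y]` (with `x = X 2`, `y = X 3`, `b = X 1`):
writing `F̃_n = y·H_n` (as `y ∣ F̃_n`), the recurrence `F̃_0 = y`, `G̃_0 = x`,
`F̃_n = F̃_{n−1}·G̃_{n−1}^{d−1}`, `G̃_n = (x − b·y)·F̃_{n−1}^d/y + b·G̃_{n−1}^d`
becomes `H_0 = 1`, `H_n = H_{n−1}·G̃_{n−1}^{d−1}`,
`G̃_n = (x − b·y)·y^{d−1}·H_{n−1}^d + b·G̃_{n−1}^d`. -/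
noncomputable def HG (d : ℕ) : ℕ → R4 × R4
  | 0 => (1, X 2)
  | n + 1 => ((HG d n).1 * (HG d n).2 ^ (d - 1),
      (X 2 - X 1 * X 3) * X 3 ^ (d - 1) * (HG d n).1 ^ d + X 1 * (HG d n).2 ^ d)

/-- `F̃_n = y·H_n`. -/
noncomputable def Ft (d n : ℕ) : R4 := X 3 * (HG d n).1

/-- The substitution `a ↦ a`, `b ↦ b`, `x ↦ a·X^d + b·Y^d`, `y ↦ Y^d`. -/
noncomputable def sub (d : ℕ) : Fin 4 → R4 := ![X 0, X 1, X 0 * X 2 ^ d + X 1 * X 3 ^ d, X 3 ^ d]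

lemma sub_app1 (d : ℕ) : sub d 1 = X 1 := rfl
lemma sub_app2 (d : ℕ) : sub d 2 = X 0 * X 2 ^ d + X 1 * X 3 ^ d := rfl
lemma sub_app3 (d : ℕ) : sub d 3 = X 3 ^ d := rfl

lemma aux_subst (e m : ℕ) :
    X 2 * X 3 ^ (e + 1) * aeval (sub (e + 2)) (HG (e + 2) m).1 = (FG (e + 2) (m + 1)).1 ∧
    aeval (sub (e + 2)) (HG (e + 2) m).2 = (FG (e + 2) (m + 1)).2 := by
  induction m with
  | zero =>
      simp [HG, FG, sub]
  | succ m ih =>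
      obtain ⟨h1, h2⟩ := ih
      constructor
      · show X 2 * X 3 ^ (e + 1) *
            aeval (sub (e + 2)) ((HG (e + 2) m).1 * (HG (e + 2) m).2 ^ (e + 2 - 1)) = _
        rw [map_mul, map_pow]
        show _ = (FG (e + 2) (m + 1)).1 * (FG (e + 2) (m + 1)).2 ^ (e + 2 - 1)
        rw [← h1, ← h2]
        ring_nf
      · show aeval (sub (e + 2)) ((X 2 - X 1 * X 3) * X 3 ^ (e + 2 - 1) * (HG (e + 2) m).1 ^ (e + 2)
            + X 1 * (HG (e + 2) m).2 ^ (e + 2)) = _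
        show _ = X 0 * (FG (e + 2) (m + 1)).1 ^ (e + 2) + X 1 * (FG (e + 2) (m + 1)).2 ^ (e + 2)
        rw [← h1, ← h2]
        simp only [map_add, map_mul, map_pow, map_sub, aeval_X, sub_app1, sub_app2, sub_app3,
          show e + 2 - 1 = e + 1 from rfl]
        ring

/-- For `d ≥ 2` and `n ≥ 1`, in `ℤ[a,b][X,Y]` we have
`X·F̃_{n−1}(a·X^d + b·Y^d, Y^d) = Y·F_n(X,Y)` and
`G̃_{n−1}(a·X^d + b·Y^d, Y^d) = G_n(X,Y)`. -/
theorem substitution_identity (d : ℕ) (hd : 2 ≤ d) (n : ℕ) (hn : 1 ≤ n) :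
    X 2 * aeval (sub d) (Ft d (n - 1)) = X 3 * (FG d n).1 ∧
    aeval (sub d) ((HG d (n - 1)).2) = (FG d n).2 := by
  obtain ⟨e, rfl⟩ : ∃ e, d = e + 2 := ⟨d - 2, by omega⟩
  obtain ⟨m, rfl⟩ : ∃ m, n = m + 1 := ⟨n - 1, by omega⟩
  obtain ⟨h1, h2⟩ := aux_subst e m
  simp only [Nat.add_sub_cancel]
  refine ⟨?_, h2⟩
  rw [Ft, map_mul, aeval_X]
  show X 2 * (sub (e + 2) 3 * _) = _
  rw [← h1]
  show X 2 * (X 3 ^ (e + 2) * _) = _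
  ring
end

section
/- Let d ≥ 2 be an integer and a a nonzero rational number. Then every rational periodic cycle of ψ_{d,a,1} on ℙ¹(ℚ) has length 1 or 2. Moreover, a rational periodic cycle of length 2 can exist only if d is even; in that case there is at most one such cycle, and any such cycle consists of two points z and −z with z ∈ ℚ satisfying a·z^d = −2. -/
open Function Set

theorem Function.IsPeriodicPt.mem_of_iterate_mem {α : Type*} {f : α → α} {s : Set α} {x : α}
    {n k : ℕ} (hx : IsPeriodicPt f n x) (hn : 0 < n) (hs : MapsTo f s s) (hk : f^[k] x ∈ s) :
    x ∈ s := by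
  have hx' : f^[n * k - k] (f^[k] x) = x := by
    rw [← iterate_add_apply, Nat.sub_add_cancel (Nat.le_mul_of_pos_left k hn)]
    exact (hx.mul_const k).eq
  exact hx' ▸ hs.iterate _ hk

theorem padicValRat_div_add_one_pow_pos {p d : ℕ} [Fact p.Prime] {x : ℚ} (hd : 2 ≤ d)
    (hx : padicValRat p x ≠ 0) : 0 < padicValRat p (x / (x + 1) ^ d) := by
  have hx0 : x ≠ 0 := by rintro rfl; simp at hx
  have hx1 : x + 1 ≠ 0 := by
    intro h
    rw [eq_neg_of_add_eq_zero_left h, padicValRat.neg, padicValRat.one] at hx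
    exact hx rfl
  rw [padicValRat.div hx0 (pow_ne_zero d hx1), padicValRat.pow]
  rcases hx.lt_or_gt with hneg | hpos
  · have hx1_val : padicValRat p (x + 1) = padicValRat p x :=
      padicValRat.add_eq_of_lt hx1 hx0 one_ne_zero (by rwa [padicValRat.one])
    have hd' : (2 : ℤ) ≤ d := by exact_mod_cast hd
    rw [hx1_val]
    nlinarith
  · have hx1_val : padicValRat p (x + 1) = 0 := by
      rw [add_comm, padicValRat.add_eq_of_lt (by rwa [add_comm]) one_ne_zero hx0
        (by rwa [padicValRat.one]), padicValRat.one]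
    rw [hx1_val, mul_zero, sub_zero]
    exact hpos

theorem Rat.den_eq_one_of_padicValRat_nonneg {q : ℚ}
    (hq : ∀ p : ℕ, p.Prime → 0 ≤ padicValRat p q) : q.den = 1 := by
  by_contra hden
  obtain ⟨p, hp, hpden⟩ := Nat.exists_prime_and_dvd hden
  have : Fact p.Prime := ⟨hp⟩
  have hnum : ¬ (p : ℤ) ∣ q.num := fun hpnum =>
    hp.one_lt.ne' (Nat.eq_one_of_dvd_coprimes q.reduced (Int.natCast_dvd.mp hpnum) hpden)
  have hval := hq p hp
  rw [padicValRat_def, padicValInt.eq_zero_of_not_dvd hnum] at hval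
  have hden_val := one_le_padicValNat_of_dvd q.den_ne_zero hpden
  omega

section psiAffine

variable {d : ℕ} {a : ℚ}

/-- `psi d a 1` in the affine coordinate. At a pole the junk value `z / 0 = 0` agrees with
`psi` followed by sending `∞` to `0`, so `Option.getD · 0` semiconjugates the two maps. -/
def psiAffine (d : ℕ) (a : ℚ) (z : ℚ) : ℚ := z / (a * z ^ d + 1)

theorem semiconj_getD_psi : Semiconj (Option.getD · 0) (psi d a 1) (psiAffine d a) := by
  rintro (_ | z)
  · simp [psi, psiAffine]
  · by_cases h : a * z ^ d + 1 = 0 <;> simp [psi, psiAffine, h]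

theorem mul_psiAffine_pow (z : ℚ) :
    a * psiAffine d a z ^ d = a * z ^ d / (a * z ^ d + 1) ^ d := by
  rw [psiAffine, div_pow, mul_div_assoc]

theorem iterate_psiAffine_eq_div_prod (z : ℚ) (k : ℕ) :
    (psiAffine d a)^[k] z = z / ∏ j ∈ Finset.range k, (a * (psiAffine d a)^[j] z ^ d + 1) := by
  induction k with
  | zero => simp
  | succ k ih => rw [iterate_succ_apply', Finset.prod_range_succ, ← div_div, ← ih]; rfl

theorem padicValRat_mul_pow_nonneg_of_isPeriodicPt {p n : ℕ} [Fact p.Prime] {z : ℚ}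
    (hd : 2 ≤ d) (hz : IsPeriodicPt (psiAffine d a) n z) (hn : 0 < n) :
    0 ≤ padicValRat p (a * z ^ d) := by
  set s := {w : ℚ | 0 < padicValRat p (a * w ^ d)}
  have hs : ∀ w, padicValRat p (a * w ^ d) ≠ 0 → psiAffine d a w ∈ s := fun w hw => by
    simp only [s, mem_ofPred_eq, mul_psiAffine_pow]
    exact padicValRat_div_add_one_pow_pos hd hw
  by_contra! hneg
  have hzs : z ∈ s := hz.mem_of_iterate_mem hn (k := 1) (fun w hw => hs w hw.ne') (hs z hneg.ne)
  exact lt_asymm hneg hzs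

theorem exists_int_mul_pow_eq_of_isPeriodicPt {n : ℕ} {z : ℚ} (hd : 2 ≤ d)
    (hz : IsPeriodicPt (psiAffine d a) n z) (hn : 0 < n) : ∃ m : ℤ, a * z ^ d = m := by
  have hden : (a * z ^ d).den = 1 := Rat.den_eq_one_of_padicValRat_nonneg fun p hp =>
    have : Fact p.Prime := ⟨hp⟩
    padicValRat_mul_pow_nonneg_of_isPeriodicPt hd hz hn
  exact ⟨_, (Rat.coe_int_num_of_den_eq_one hden).symm⟩

theorem mul_pow_eq_neg_two_of_isPeriodicPt {n : ℕ} {z : ℚ} (hd : 2 ≤ d) (ha : a ≠ 0)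
    (hz : IsPeriodicPt (psiAffine d a) n z) (hn : 0 < n) (hz0 : z ≠ 0) : a * z ^ d = -2 := by
  have hint : ∀ k, ∃ m : ℤ, a * (psiAffine d a)^[k] z ^ d + 1 = m := fun k => by
    obtain ⟨m, hm⟩ := exists_int_mul_pow_eq_of_isPeriodicPt hd (hz.apply_iterate k) hn
    exact ⟨m + 1, by rw [hm]; push_cast; rfl⟩
  choose m hm using hint
  have hprod : ∏ k ∈ Finset.range n, m k = 1 := by
    have h := iterate_psiAffine_eq_div_prod (d := d) (a := a) z n
    rw [hz.eq, eq_comm, div_eq_mul_inv, mul_eq_left₀ hz0, inv_eq_one] at h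
    simp only [hm] at h
    exact_mod_cast h
  have hunit : m 0 = 1 ∨ m 0 = -1 := Int.isUnit_iff.mp <| isUnit_of_dvd_one <|
    hprod ▸ Finset.dvd_prod_of_mem m (Finset.mem_range.mpr hn)
  have hm0 : a * z ^ d + 1 = m 0 := hm 0
  rcases hunit with h | h <;> rw [h] at hm0 <;> push_cast at hm0
  · exact absurd (by linarith) (mul_ne_zero ha (pow_ne_zero d hz0))
  · linarith

theorem even_of_isPeriodicPt {n : ℕ} {z : ℚ} (hd : 2 ≤ d) (ha : a ≠ 0)
    (hz : IsPeriodicPt (psiAffine d a) n z) (hn : 0 < n) (hz0 : z ≠ 0) : Even d := by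
  have h2 := mul_pow_eq_neg_two_of_isPeriodicPt hd ha hz hn hz0
  have hneg : psiAffine d a z = -z := by rw [psiAffine, h2]; ring
  have h2' := mul_pow_eq_neg_two_of_isPeriodicPt hd ha hz.apply hn (hneg ▸ neg_ne_zero.mpr hz0)
  by_contra hodd
  rw [hneg, (Nat.not_even_iff_odd.mp hodd).neg_pow] at h2'
  linarith

theorem isFixedPt_psi_some_zero (hd : d ≠ 0) : IsFixedPt (psi d a 1) (some 0) := by
  simp [IsFixedPt, psi, hd]

theorem psi_some_of_mul_pow_eq_neg_two {z : ℚ} (h : a * z ^ d = -2) :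
    psi d a 1 (some z) = some (-z) := by
  norm_num [psi, h, div_neg_eq_neg_div]

theorem eq_some_zero_or_of_isPeriodicPt_psi {n : ℕ} {P : Option ℚ} (hd : 2 ≤ d) (ha : a ≠ 0)
    (hP : IsPeriodicPt (psi d a 1) n P) (hn : 0 < n) :
    P = some 0 ∨ Even d ∧ ∃ z, P = some z ∧ z ≠ 0 ∧ a * z ^ d = -2 := by
  have hfix := isFixedPt_psi_some_zero (a := a) (by omega : d ≠ 0)
  rcases P with _ | z
  · exact .inl <| hP.mem_of_iterate_mem hn (s := {some 0}) (k := 1)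
      (fun _ hw => by rw [mem_singleton_iff.mp hw]; exact hfix) rfl
  by_cases hz0 : z = 0
  · exact .inl (congrArg some hz0)
  have hz : IsPeriodicPt (psiAffine d a) n z := hP.map semiconj_getD_psi
  exact .inr ⟨even_of_isPeriodicPt hd ha hz hn hz0, z, rfl, hz0,
    mul_pow_eq_neg_two_of_isPeriodicPt hd ha hz hn hz0⟩

theorem minimalPeriod_psi_eq_two_iff {P : Option ℚ} (hd : 2 ≤ d) (ha : a ≠ 0) :
    minimalPeriod (psi d a 1) P = 2 ↔ Even d ∧ ∃ z, P = some z ∧ z ≠ 0 ∧ a * z ^ d = -2 := by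
  constructor
  · intro hP
    refine (eq_some_zero_or_of_isPeriodicPt_psi hd ha (hP ▸ isPeriodicPt_minimalPeriod _ P)
      two_pos).resolve_left ?_
    rintro rfl
    rw [minimalPeriod_eq_one_iff_isFixedPt.mpr (isFixedPt_psi_some_zero (by omega))] at hP
    exact absurd hP (by norm_num)
  · rintro ⟨hev, z, rfl, hz0, hz⟩
    have hz' : a * (-z) ^ d = -2 := by rwa [hev.neg_pow]
    refine minimalPeriod_eq_prime ?_ fun hfix => hz0 ?_
    · change psi d a 1 (psi d a 1 (some z)) = some z
      rw [psi_some_of_mul_pow_eq_neg_two hz, psi_some_of_mul_pow_eq_neg_two hz', neg_neg]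
    · rw [IsFixedPt, psi_some_of_mul_pow_eq_neg_two hz, Option.some_inj] at hfix
      linarith

theorem encard_setOf_minimalPeriod_psi_eq_two_le (hd : 2 ≤ d) (ha : a ≠ 0) :
    {P | minimalPeriod (psi d a 1) P = 2}.encard ≤ 2 := by
  rcases eq_empty_or_nonempty {P | minimalPeriod (psi d a 1) P = 2} with hS | ⟨P₀, hP₀⟩
  · simp [hS]
  obtain ⟨-, z₀, rfl, -, hz₀⟩ := (minimalPeriod_psi_eq_two_iff hd ha).mp hP₀
  have hsub : {P | minimalPeriod (psi d a 1) P = 2} ⊆ {some z₀, some (-z₀)} := by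
    intro P hP
    obtain ⟨-, z, rfl, -, hz⟩ := (minimalPeriod_psi_eq_two_iff hd ha).mp hP
    have hpow : z ^ d = z₀ ^ d := mul_left_cancel₀ ha (hz.trans hz₀.symm)
    rcases (pow_eq_pow_iff_of_ne_zero (by omega)).mp hpow with rfl | ⟨rfl, -⟩ <;> simp
  calc _ ≤ ({some z₀, some (-z₀)} : Set (Option ℚ)).encard := encard_le_encard hsub
    _ ≤ 2 := (encard_insert_le _ _).trans (by norm_num)

end psiAffine

/-- For `d ≥ 2` and a nonzero rational `a`: every rational periodic
cycle of `ψ_{d,a,1}` has length `1` or `2`; a cycle of length `2` can exist only if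
`d` is even, in which case any point of exact period `2` is an affine point `z` with
`a·z^d = −2` whose cycle is `{z, −z}`, and there is at most one such cycle (i.e. at
most two points of exact period `2`). -/
theorem periodic_cycles_psi_b_one
    (d : ℕ) (hd : 2 ≤ d) (a : ℚ) (ha : a ≠ 0) :
    (∀ P : Option ℚ, (∃ n : ℕ, 0 < n ∧ (psi d a 1)^[n] P = P) →
      Function.minimalPeriod (psi d a 1) P = 1 ∨
        Function.minimalPeriod (psi d a 1) P = 2) ∧
    (∀ P : Option ℚ, Function.minimalPeriod (psi d a 1) P = 2 →
      Even d ∧ ∃ z : ℚ, P = some z ∧ a * z ^ d = -2 ∧ psi d a 1 (some z) = some (-z)) ∧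
    {P : Option ℚ | Function.minimalPeriod (psi d a 1) P = 2}.encard ≤ 2 := by
  refine ⟨?_, fun P hP => ?_, encard_setOf_minimalPeriod_psi_eq_two_le hd ha⟩
  · rintro P ⟨n, hn, hP⟩
    rcases eq_some_zero_or_of_isPeriodicPt_psi hd ha hP hn with rfl | hP2
    · exact .inl (minimalPeriod_eq_one_iff_isFixedPt.mpr (isFixedPt_psi_some_zero (by omega)))
    · exact .inr ((minimalPeriod_psi_eq_two_iff hd ha).mpr hP2)
  · obtain ⟨hev, z, rfl, -, hz⟩ := (minimalPeriod_psi_eq_two_iff hd ha).mp hP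
    exact ⟨hev, z, rfl, hz, psi_some_of_mul_pow_eq_neg_two hz⟩
end

section
/- Let d ≥ 2 be an integer and a a nonzero rational number. Then for b = 1 and for b = −1, the set PrePer(ψ_{d,a,b}, ℙ¹(ℚ)) of rational preperiodic points of ψ_{d,a,b} has at most 6 elements. -/
/-!
In the coordinate `c = a z^d`, with `c = 0` at `∞`, the map `ψ_{d,a,b}` becomes
`φ(c) = c / (c + b)^d`; the fibre over `c = 0` is `{∞, 0}` and every other value comes from at most
the two points `±z`. For `b = ±1` compare the `p`-adic valuations of `c`, `c + b` and `φ(c)`: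
positivity of `v_p` persists along an orbit and negative `v_p(c)` turns into positive `v_p(φ(c))`,
so on a cycle every `v_p(c + b)` vanishes and `c = -2b`. The same bookkeeping shows that, away from
`c ∈ {0, -b}`, the values `-b` and `-b/2` have no preimage and `-2b` has only `-2b` and `-b/2`.
Hence preperiodic values of `c` lie in `{0, -b, -2b, -b/2}`. As `2` is not a `d`-th power in `ℚ`,
the value `-b` is never attained together with `-2b` or `-b/2`, leaving at most six points.
-/

open Function Set

theorem Rat.eq_one_or_neg_one_of_forall_padicValRat_eq_zero {q : ℚ} (hq : q ≠ 0)
    (h : ∀ p, p.Prime → padicValRat p q = 0) : q = 1 ∨ q = -1 := by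
  have hnum_den : q.num.natAbs = q.den := by
    refine Nat.eq_of_factorization_eq (by simpa using hq) q.den_ne_zero fun p => ?_
    by_cases hp : p.Prime
    · have hvp := h p hp
      rw [padicValRat_def, padicValInt] at hvp
      rw [Nat.factorization_def _ hp, Nat.factorization_def _ hp]
      omega
    · simp [Nat.factorization_eq_zero_of_not_prime _ hp]
  have hden : q.den = 1 := (Nat.coprime_self _).mp (hnum_den ▸ q.reduced)
  rw [← Rat.coe_int_num_of_den_eq_one hden]
  rcases Int.natAbs_eq_iff.mp (hnum_den.trans hden) with h | h <;> simp [h]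

theorem padicValRat_self_two : padicValRat 2 2 = 1 := by
  simpa using padicValRat.self (p := 2) one_lt_two

theorem padicValRat_two_eq_zero_of_ne {p : ℕ} [Fact p.Prime] (hp : p ≠ 2) :
    padicValRat p 2 = 0 := by
  have h := padicValRat.of_nat (p := p) (n := 2)
  rw [padicValNat_primes hp] at h
  exact_mod_cast h

theorem Rat.two_mul_eq_one_or_neg_one_of_padicValRat {q : ℚ} (hq : q ≠ 0)
    (h₂ : padicValRat 2 q = -1) (hodd : ∀ p, p.Prime → p ≠ 2 → padicValRat p q = 0) :
    2 * q = 1 ∨ 2 * q = -1 := by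
  refine Rat.eq_one_or_neg_one_of_forall_padicValRat_eq_zero (by positivity) fun p hp => ?_
  have := Fact.mk hp
  rw [padicValRat.mul two_ne_zero hq]
  by_cases hp2 : p = 2
  · subst hp2
    rw [padicValRat_self_two, h₂]
    rfl
  · rw [padicValRat_two_eq_zero_of_ne hp2, hodd p hp hp2, add_zero]

theorem Rat.pow_ne_two {d : ℕ} (hd : 2 ≤ d) (x : ℚ) : x ^ d ≠ 2 := by
  intro h
  have hv := congrArg (padicValRat 2) h
  rw [padicValRat.pow, padicValRat_self_two] at hv
  rcases Int.eq_one_or_neg_one_of_mul_eq_one hv with h1 | h1 <;> omega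

def Function.preperiodicPts {α : Type*} (f : α → α) : Set α :=
  {x | ∃ m n, m < n ∧ f^[m] x = f^[n] x}

theorem Set.encard_pair_le {α : Type*} (x y : α) : ({x, y} : Set α).encard ≤ 2 :=
  (encard_insert_le _ _).trans (by rw [encard_singleton]; rfl)

theorem Function.Semiconj.mapsTo_preperiodicPts {α β : Type*} {g : α → β} {fa : α → α}
    {fb : β → β} (h : Semiconj g fa fb) : MapsTo g (preperiodicPts fa) (preperiodicPts fb) :=
  fun _ ⟨m, n, hmn, hx⟩ =>
    ⟨m, n, hmn, by rw [← (h.iterate_right m).eq, hx, (h.iterate_right n).eq]⟩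

theorem Function.exists_isPeriodicPt_iterate_of_mem_preperiodicPts {α : Type*} {f : α → α}
    {x : α} (hx : x ∈ preperiodicPts f) : ∃ m n, 0 < n ∧ IsPeriodicPt f n (f^[m] x) := by
  obtain ⟨m, n, hmn, h⟩ := hx
  refine ⟨m, n - m, by omega, ?_⟩
  rw [IsPeriodicPt, IsFixedPt, ← iterate_add_apply, Nat.sub_add_cancel hmn.le, h]

theorem Function.IsPeriodicPt.iterate_ne_of_isFixedPt {α : Type*} {f : α → α} {n : ℕ}
    {x y : α} (hx : IsPeriodicPt f n x) (hn : 0 < n) (hy : IsFixedPt f y) (hxy : x ≠ y)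
    (j : ℕ) : f^[j] x ≠ y := fun h =>
  hxy <| (hx.iterate j).eq_of_apply_eq_same ((hy.isPeriodicPt n).iterate j) hn <| by
    rw [h, iterate_fixed hy]

/-- `ψ_{d,a,b}` in the coordinate `c = a z^d`. At `c = -b` the junk value `c / 0 = 0` stands in
for the detour through `∞`, which `phiCoord` also sends to `0`. -/
def phi (d : ℕ) (b c : ℚ) : ℚ := c / (c + b) ^ d

section PadicValRat

variable {d p : ℕ} [Fact p.Prime] {b c : ℚ}

theorem padicValRat_add_eq_zero_of_pos (hb₀ : b ≠ 0) (hb : padicValRat p b = 0)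
    (hcb : c + b ≠ 0) (h : 0 < padicValRat p c) : padicValRat p (c + b) = 0 := by
  have hc : c ≠ 0 := by rintro rfl; simp at h
  rw [add_comm, padicValRat.add_eq_of_lt (by rwa [add_comm]) hb₀ hc (by omega), hb]

theorem padicValRat_phi (hc : c ≠ 0) (hcb : c + b ≠ 0) :
    padicValRat p (phi d b c) = padicValRat p c - d * padicValRat p (c + b) := by
  rw [phi, padicValRat.div hc (pow_ne_zero _ hcb), padicValRat.pow]

theorem padicValRat_phi_of_pos (hb₀ : b ≠ 0) (hb : padicValRat p b = 0) (hcb : c + b ≠ 0)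
    (h : 0 < padicValRat p c) : padicValRat p (phi d b c) = padicValRat p c := by
  have hc : c ≠ 0 := by rintro rfl; simp at h
  rw [padicValRat_phi hc hcb, padicValRat_add_eq_zero_of_pos hb₀ hb hcb h, mul_zero, sub_zero]

theorem padicValRat_phi_of_neg (hb₀ : b ≠ 0) (hb : padicValRat p b = 0) (hcb : c + b ≠ 0)
    (h : padicValRat p c < 0) : padicValRat p (phi d b c) = (1 - d) * padicValRat p c := by
  have hc : c ≠ 0 := by rintro rfl; simp at h
  rw [padicValRat_phi hc hcb, padicValRat.add_eq_of_lt hcb hc hb₀ (by omega)]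
  ring

theorem padicValRat_phi_pos_of_neg (hd : 2 ≤ d) (hb₀ : b ≠ 0) (hb : padicValRat p b = 0)
    (hcb : c + b ≠ 0) (h : padicValRat p c < 0) : 0 < padicValRat p (phi d b c) := by
  rw [padicValRat_phi_of_neg hb₀ hb hcb h]
  exact mul_pos_of_neg_of_neg (by omega) h

theorem padicValRat_add_eq_zero_of_nonneg (hd : d ≠ 0) (hb₀ : b ≠ 0)
    (hb : padicValRat p b = 0) (hc : c ≠ 0) (hcb : c + b ≠ 0) (h : 0 ≤ padicValRat p c)
    (hφ : 0 ≤ padicValRat p (phi d b c)) : padicValRat p (c + b) = 0 := by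
  rcases h.lt_or_eq with h | h
  · exact padicValRat_add_eq_zero_of_pos hb₀ hb hcb h
  · have hge : 0 ≤ padicValRat p (c + b) := by
      simpa [← h, hb] using padicValRat.min_le_padicValRat_add (p := p) hcb
    rw [padicValRat_phi hc hcb, ← h] at hφ
    have : (0 : ℤ) < d := by omega
    nlinarith

theorem nonneg_of_padicValRat_phi_nonpos (hd : 2 ≤ d) (hb₀ : b ≠ 0)
    (hb : padicValRat p b = 0) (hcb : c + b ≠ 0) (h : padicValRat p (phi d b c) ≤ 0) :
    0 ≤ padicValRat p c := by
  by_contra! hneg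
  exact (padicValRat_phi_pos_of_neg hd hb₀ hb hcb hneg).not_ge h

theorem padicValRat_add_eq_zero_of_phi (hd : 2 ≤ d) (hb₀ : b ≠ 0) (hb : padicValRat p b = 0)
    (hc : c ≠ 0) (hcb : c + b ≠ 0) (h : padicValRat p (phi d b c) = 0) :
    padicValRat p (c + b) = 0 :=
  padicValRat_add_eq_zero_of_nonneg (by omega) hb₀ hb hc hcb
    (nonneg_of_padicValRat_phi_nonpos hd hb₀ hb hcb h.le) h.ge

theorem dvd_padicValRat_phi_of_neg (hd : 2 ≤ d) (hb₀ : b ≠ 0) (hb : padicValRat p b = 0)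
    (hc : c ≠ 0) (hcb : c + b ≠ 0) (h : padicValRat p (phi d b c) < 0) :
    (d : ℤ) ∣ padicValRat p (phi d b c) := by
  have hc0 : padicValRat p c = 0 := by
    refine le_antisymm ?_ (nonneg_of_padicValRat_phi_nonpos hd hb₀ hb hcb h.le)
    by_contra! hpos
    rw [padicValRat_phi_of_pos hb₀ hb hcb hpos] at h
    omega
  rw [padicValRat_phi hc hcb, hc0, zero_sub]
  exact (dvd_mul_right _ _).neg_right

end PadicValRat

section PhiDynamics

variable {d : ℕ} {b c : ℚ}

theorem ne_zero_of_eq_one_or_neg_one (hb : b = 1 ∨ b = -1) : b ≠ 0 := by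
  rcases hb with rfl | rfl <;> norm_num

theorem padicValRat_eq_zero_of_eq_one_or_neg_one (hb : b = 1 ∨ b = -1) (p : ℕ) :
    padicValRat p b = 0 := by
  rcases hb with rfl | rfl <;> simp

theorem phi_zero : phi d b 0 = 0 := by simp [phi]

theorem phi_neg_self (hd : d ≠ 0) : phi d b (-b) = 0 := by simp [phi, hd]

theorem eq_neg_two_mul_of_forall_padicValRat_add_eq_zero (hb : b = 1 ∨ b = -1) (hc : c ≠ 0)
    (hcb : c + b ≠ 0) (h : ∀ p, p.Prime → padicValRat p (c + b) = 0) : c = -2 * b := by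
  rcases Rat.eq_one_or_neg_one_of_forall_padicValRat_eq_zero hcb h with h1 | h1 <;>
    rcases hb with rfl | rfl <;> first | linarith | exact absurd (by linarith) hc

theorem phi_ne_neg (hd : 2 ≤ d) (hb : b = 1 ∨ b = -1) (hc : c ≠ 0) (hcb : c + b ≠ 0) :
    phi d b c ≠ -b := by
  intro h
  have hb₀ := ne_zero_of_eq_one_or_neg_one hb
  have hc' : c = -2 * b :=
    eq_neg_two_mul_of_forall_padicValRat_add_eq_zero hb hc hcb fun p hp => by
      have := Fact.mk hp
      exact padicValRat_add_eq_zero_of_phi hd hb₀ (padicValRat_eq_zero_of_eq_one_or_neg_one hb p)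
        hc hcb (by rw [h, padicValRat.neg, padicValRat_eq_zero_of_eq_one_or_neg_one hb])
  rw [hc', phi, show -2 * b + b = -b by ring,
    div_eq_iff (pow_ne_zero _ (neg_ne_zero.mpr hb₀))] at h
  exact Rat.pow_ne_two hd (-b)
    (mul_left_cancel₀ (neg_ne_zero.mpr hb₀) (by linear_combination -h))

theorem phi_ne_neg_div_two (hd : 2 ≤ d) (hb : b = 1 ∨ b = -1) (hc : c ≠ 0)
    (hcb : c + b ≠ 0) : phi d b c ≠ -b / 2 := by
  intro h
  have hb₀ := ne_zero_of_eq_one_or_neg_one hb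
  have hv : padicValRat 2 (phi d b c) = -1 := by
    rw [h, padicValRat.div (neg_ne_zero.mpr hb₀) two_ne_zero, padicValRat.neg,
      padicValRat_eq_zero_of_eq_one_or_neg_one hb, padicValRat_self_two]
    rfl
  have hdvd := dvd_padicValRat_phi_of_neg hd hb₀ (padicValRat_eq_zero_of_eq_one_or_neg_one hb 2)
    hc hcb (by omega)
  rw [hv, dvd_neg] at hdvd
  have := Int.le_of_dvd one_pos hdvd
  omega

theorem eq_of_phi_eq_neg_two_mul (hd : 2 ≤ d) (hb : b = 1 ∨ b = -1) (hc : c ≠ 0)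
    (hcb : c + b ≠ 0) (h : phi d b c = -2 * b) : c = -2 * b ∨ c = -b / 2 := by
  have hb₀ := ne_zero_of_eq_one_or_neg_one hb
  have hbv := padicValRat_eq_zero_of_eq_one_or_neg_one hb
  have hφv : ∀ p, p.Prime → padicValRat p (phi d b c) = if p = 2 then 1 else 0 := by
    intro p hp
    have := Fact.mk hp
    rw [h, padicValRat.mul (by norm_num) hb₀, padicValRat.neg, hbv, add_zero]
    split_ifs with hp2
    · subst hp2; exact padicValRat_self_two
    · exact padicValRat_two_eq_zero_of_ne hp2
  have hodd : ∀ p, p.Prime → p ≠ 2 → padicValRat p (c + b) = 0 := fun p hp hp2 => by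
    have := Fact.mk hp
    exact padicValRat_add_eq_zero_of_phi hd hb₀ (hbv p) hc hcb (by simp [hφv p hp, hp2])
  have hφ2 := hφv 2 Nat.prime_two
  rw [if_pos rfl] at hφ2
  rcases le_or_gt 0 (padicValRat 2 c) with hc2 | hc2
  · left
    refine eq_neg_two_mul_of_forall_padicValRat_add_eq_zero hb hc hcb fun p hp => ?_
    by_cases hp2 : p = 2
    · subst hp2
      exact padicValRat_add_eq_zero_of_nonneg (d := d) (by omega) hb₀ (hbv 2) hc hcb hc2
        (by rw [hφ2]; exact zero_le_one)
    · exact hodd p hp hp2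
  · right
    rw [padicValRat_phi_of_neg hb₀ (hbv 2) hcb hc2] at hφ2
    obtain ⟨hd2, hc2⟩ : d = 2 ∧ padicValRat 2 c = -1 := by
      rcases Int.eq_one_or_neg_one_of_mul_eq_one' hφ2 with ⟨h1, h2⟩ | ⟨h1, h2⟩ <;> omega
    have hcb2 : padicValRat 2 (c + b) = -1 := by
      rw [padicValRat.add_eq_of_lt hcb hc hb₀ (by rw [hbv]; omega), hc2]
    subst hd2
    have hsq : (c + b) ^ 2 = 1 / 4 := by
      rcases Rat.two_mul_eq_one_or_neg_one_of_padicValRat hcb hcb2 hodd with h2 | h2 <;>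
        nlinarith
    rw [phi, hsq] at h
    linarith

theorem padicValRat_nonneg_of_isPeriodicPt {p n : ℕ} [Fact p.Prime] (hd : 2 ≤ d)
    (hb : b = 1 ∨ b = -1) (hc : IsPeriodicPt (phi d b) n c) (hn : 0 < n)
    (hcb : ∀ j, (phi d b)^[j] c + b ≠ 0) : 0 ≤ padicValRat p c := by
  have hb₀ := ne_zero_of_eq_one_or_neg_one hb
  have hbv := padicValRat_eq_zero_of_eq_one_or_neg_one hb p
  by_contra! hneg
  -- once `v_p` is positive it stays constant along the orbit, so it cannot return to `v_p(c) < 0`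
  have hpos : ∀ i, 0 < padicValRat p ((phi d b)^[i + 1] c) := by
    intro i
    induction i with
    | zero => exact padicValRat_phi_pos_of_neg hd hb₀ hbv (hcb 0) hneg
    | succ i ih => rwa [iterate_succ_apply', padicValRat_phi_of_pos hb₀ hbv (hcb _) ih]
  have := hpos (n - 1)
  rw [Nat.sub_add_cancel hn, hc.eq] at this
  omega

theorem eq_neg_two_mul_of_isPeriodicPt {n : ℕ} (hd : 2 ≤ d) (hb : b = 1 ∨ b = -1)
    (hc : IsPeriodicPt (phi d b) n c) (hn : 0 < n) (hc₀ : c ≠ 0) : c = -2 * b := by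
  have hne : ∀ j, (phi d b)^[j] c ≠ 0 := hc.iterate_ne_of_isFixedPt hn phi_zero hc₀
  have hcb : ∀ j, (phi d b)^[j] c + b ≠ 0 := fun j h => hne (j + 1) <| by
    rw [iterate_succ_apply', eq_neg_of_add_eq_zero_left h, phi_neg_self (by omega)]
  have hcb' : ∀ j, (phi d b)^[j] (phi d b c) + b ≠ 0 := fun j => by
    rw [← iterate_succ_apply]; exact hcb _
  refine eq_neg_two_mul_of_forall_padicValRat_add_eq_zero hb hc₀ (hcb 0) fun p hp => ?_
  have := Fact.mk hp
  exact padicValRat_add_eq_zero_of_nonneg (by omega) (ne_zero_of_eq_one_or_neg_one hb)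
    (padicValRat_eq_zero_of_eq_one_or_neg_one hb p) hc₀ (hcb 0)
    (padicValRat_nonneg_of_isPeriodicPt hd hb hc hn hcb)
    (padicValRat_nonneg_of_isPeriodicPt hd hb (hc.apply_iterate 1) hn hcb')

def phiPreperCandidates (b : ℚ) : Set ℚ := {0, -b, -2 * b, -b / 2}

theorem mapsTo_phi_compl_phiPreperCandidates (hd : 2 ≤ d) (hb : b = 1 ∨ b = -1) :
    MapsTo (phi d b) (phiPreperCandidates b)ᶜ (phiPreperCandidates b)ᶜ := by
  intro c hc hφ
  simp only [phiPreperCandidates, mem_compl_iff, mem_insert_iff, mem_singleton_iff,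
    not_or] at hc hφ
  obtain ⟨hc₀, hc₁, hc₂, hc₃⟩ := hc
  have hcb : c + b ≠ 0 := fun h => hc₁ (eq_neg_of_add_eq_zero_left h)
  rcases hφ with h | h | h | h
  · exact div_ne_zero hc₀ (pow_ne_zero _ hcb) h
  · exact phi_ne_neg hd hb hc₀ hcb h
  · rcases eq_of_phi_eq_neg_two_mul hd hb hc₀ hcb h with h' | h'
    exacts [hc₂ h', hc₃ h']
  · exact phi_ne_neg_div_two hd hb hc₀ hcb h

theorem preperiodicPts_phi_subset (hd : 2 ≤ d) (hb : b = 1 ∨ b = -1) :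
    preperiodicPts (phi d b) ⊆ phiPreperCandidates b := by
  intro c hc
  obtain ⟨m, n, hn, hper⟩ := exists_isPeriodicPt_iterate_of_mem_preperiodicPts hc
  by_contra hc'
  refine (mapsTo_phi_compl_phiPreperCandidates hd hb).iterate m hc' ?_
  by_cases h₀ : (phi d b)^[m] c = 0
  · simp [phiPreperCandidates, h₀]
  · simp [phiPreperCandidates, eq_neg_two_mul_of_isPeriodicPt hd hb hper hn h₀]

end PhiDynamics

def phiCoord (d : ℕ) (a : ℚ) : Option ℚ → ℚ
  | none => 0
  | some z => a * z ^ d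

section PsiPhi

variable {d : ℕ} {a b : ℚ}

theorem semiconj_phiCoord_psi_phi (hd : d ≠ 0) :
    Semiconj (phiCoord d a) (psi d a b) (phi d b) := by
  rintro (_ | z)
  · simp [phiCoord, psi, phi, hd]
  · by_cases h : a * z ^ d + b = 0
    · simp [phiCoord, psi, phi, h, hd]
    · simp [phiCoord, psi, phi, h, div_pow]
      ring

theorem encard_preimage_phiCoord_singleton_le (hd : d ≠ 0) (ha : a ≠ 0) (c : ℚ) :
    (phiCoord d a ⁻¹' {c}).encard ≤ 2 := by
  rcases eq_or_ne c 0 with rfl | hc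
  · refine (encard_le_encard fun P hP => ?_).trans (encard_pair_le none (some 0))
    rcases P with _ | z
    · exact mem_insert _ _
    · simp_all [phiCoord]
  rcases (phiCoord d a ⁻¹' {c}).eq_empty_or_nonempty with h | ⟨_ | w, hw⟩
  · simp [h]
  · exact absurd hw.symm hc
  refine (encard_le_encard fun P hP => ?_).trans (encard_pair_le (some w) (some (-w)))
  rcases P with _ | z
  · exact absurd hP.symm hc
  · have hzw : z ^ d = w ^ d := mul_left_cancel₀ ha (hP.trans hw.symm)
    rcases (pow_eq_pow_iff_of_ne_zero hd).mp hzw with rfl | ⟨rfl, -⟩ <;> simp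

theorem phiCoord_ne_two_mul (hd : 2 ≤ d) (ha : a ≠ 0) {P Q : Option ℚ}
    (hQ : phiCoord d a Q ≠ 0) : phiCoord d a P ≠ 2 * phiCoord d a Q := by
  rcases Q with _ | w
  · exact absurd rfl hQ
  have hw : w ≠ 0 := by rintro rfl; simp [phiCoord, show d ≠ 0 by omega] at hQ
  rcases P with _ | z
  · exact fun h => hQ (by simpa [phiCoord] using h.symm)
  · intro h
    refine Rat.pow_ne_two hd (z / w) ?_
    rw [div_pow, div_eq_iff (pow_ne_zero _ hw)]
    exact mul_left_cancel₀ ha (by simp only [phiCoord] at h; linear_combination h)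

theorem encard_preimage_phiCoord_le_six (hd : d ≠ 0) (ha : a ≠ 0) (x y z : ℚ) :
    (phiCoord d a ⁻¹' {x, y, z}).encard ≤ 6 := by
  simp only [insert_eq, preimage_union]
  calc _ ≤ (phiCoord d a ⁻¹' {x}).encard
        + ((phiCoord d a ⁻¹' {y}).encard + (phiCoord d a ⁻¹' {z}).encard) :=
        (encard_union_le _ _).trans (add_le_add_right (encard_union_le _ _) _)
    _ ≤ 2 + (2 + 2) := by
        gcongr <;> exact encard_preimage_phiCoord_singleton_le hd ha _
    _ = 6 := rfl

theorem exists_preimage_phiPreperCandidates_subset (hd : 2 ≤ d) (ha : a ≠ 0)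
    (hb : b = 1 ∨ b = -1) :
    ∃ x y, phiCoord d a ⁻¹' phiPreperCandidates b ⊆ phiCoord d a ⁻¹' {0, x, y} := by
  have hb₀ := ne_zero_of_eq_one_or_neg_one hb
  by_cases hattained : -b ∈ range (phiCoord d a)
  · obtain ⟨Q, hQ⟩ := hattained
    refine ⟨-b, -b, fun P hP => ?_⟩
    rcases hP with h | h | h | h
    · exact .inl h
    · exact .inr (.inl h)
    · exact absurd (by rw [h, hQ]; ring) (phiCoord_ne_two_mul hd ha (hQ ▸ neg_ne_zero.mpr hb₀))
    · have hP : phiCoord d a P ≠ 0 := by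
        rw [show phiCoord d a P = -b / 2 from h]; simpa using hb₀
      exact absurd (by rw [h, hQ]; ring) (phiCoord_ne_two_mul hd ha (P := Q) hP)
  · refine ⟨-2 * b, -b / 2, fun P hP => ?_⟩
    rcases hP with h | h | h | h
    · exact .inl h
    · exact absurd ⟨P, h⟩ hattained
    · exact .inr (.inl h)
    · exact .inr (.inr h)

theorem encard_preperiodicPts_psi_le_six (hd : 2 ≤ d) (ha : a ≠ 0) (hb : b = 1 ∨ b = -1) :
    (preperiodicPts (psi d a b)).encard ≤ 6 := by
  have hd₀ : d ≠ 0 := by omega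
  have hsub : preperiodicPts (psi d a b) ⊆ phiCoord d a ⁻¹' phiPreperCandidates b :=
    fun P hP => preperiodicPts_phi_subset hd hb
      ((semiconj_phiCoord_psi_phi hd₀).mapsTo_preperiodicPts hP)
  obtain ⟨x, y, hxy⟩ := exists_preimage_phiPreperCandidates_subset hd ha hb
  exact (encard_le_encard (hsub.trans hxy)).trans (encard_preimage_phiCoord_le_six hd₀ ha 0 x y)

end PsiPhi

/-- For `d ≥ 2` and a nonzero rational `a`, both `ψ_{d,a,1}` and
`ψ_{d,a,−1}` have at most `6` rational preperiodic points. -/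
theorem preper_card_le_six_b_pm_one
    (d : ℕ) (hd : 2 ≤ d) (a : ℚ) (ha : a ≠ 0) :
    {P : Option ℚ | ∃ m n : ℕ, m < n ∧ (psi d a 1)^[m] P = (psi d a 1)^[n] P}.encard ≤ 6 ∧
    {P : Option ℚ | ∃ m n : ℕ, m < n ∧ (psi d a (-1))^[m] P = (psi d a (-1))^[n] P}.encard ≤ 6 :=
  ⟨encard_preperiodicPts_psi_le_six hd ha (.inl rfl),
    encard_preperiodicPts_psi_le_six hd ha (.inr rfl)⟩
end

section
/- Fix a prime p, an odd integer d ≥ 3, a nonzero rational a, and b = σ·p^e with σ ∈ {1, −1} and e ≥ 0 an integer. Then every point of ℙ¹(ℚ) that is periodic under ψ_{d,a,b} is a fixed point of ψ_{d,a,b}. -/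
/-!
Write a periodic orbit `z_k ≠ 0` of `ψ` on the affine chart as `z_{k+1} = z_k / c_k` with
multipliers `c_k = a z_k^d + b`. Then `c_{k+1} = (c_k - b) / c_k^d + b`, in which `a` no longer
appears, `c_k ≠ b`, and the product of the `c_k` over a period is `1`. At a prime `q` the
ultrametric inequality gives `min (v_q c_{k+1}) 0 ≤ -(d - 1) * max (v_q c_k) 0` unless
`0 < v_q c_k = v_q b`; summed over a period against `∑ v_q c_k = 0`, this forces `v_q c_k = 0`.
For `q ≠ p` there is no exception. At `q = p` the exception means `c_k = -b`, which is sent to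
`(2 + b^d) / b^(d-1)`, and `2 ± p^(de)` has a prime factor other than `p`. So every `c_k` is `±1`,
and since `-1 ↦ 1 + 2b ∉ {±1}`, `c_0 = 1`: the point `z_0` is fixed.
-/

open Finset Function

theorem Finset.prod_range_mul_eq_of_mul_succ {M : Type*} [CommMonoid M] {c z : ℕ → M}
    (h : ∀ k, c k * z (k + 1) = z k) (n : ℕ) : (∏ k ∈ range n, c k) * z n = z 0 := by
  induction n with
  | zero => simp
  | succ n ih => rw [prod_range_succ, mul_assoc, h, ih]

theorem Finset.sum_range_succ_eq_of_eq {M : Type*} [AddCancelCommMonoid M] {f : ℕ → M} {n : ℕ}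
    (h : f n = f 0) : ∑ k ∈ range n, f (k + 1) = ∑ k ∈ range n, f k := by
  have := (sum_range_succ' f n).symm.trans (sum_range_succ f n)
  rwa [h, add_left_inj] at this

theorem Function.Periodic.eq_zero_of_min_le_neg_mul_max {v : ℕ → ℤ} {n : ℕ} (hn : 0 < n)
    (hv : Periodic v n) (hsum : ∑ k ∈ range n, v k = 0) {K : ℤ} (hK : 1 < K)
    (hstep : ∀ k, min (v (k + 1)) 0 ≤ -K * max (v k) 0) (k : ℕ) : v k = 0 := by
  have hPN : ∑ k ∈ range n, max (v k) 0 + ∑ k ∈ range n, min (v k) 0 = 0 := by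
    rw [← sum_add_distrib]
    exact (sum_congr rfl fun k _ => by rw [add_comm, min_add_max, add_zero]).trans hsum
  have hNP : ∑ k ∈ range n, min (v k) 0 ≤ -K * ∑ k ∈ range n, max (v k) 0 := by
    rw [mul_sum, ← sum_range_succ_eq_of_eq (f := fun k => min (v k) 0) (by simp only [hv.eq])]
    exact sum_le_sum fun k _ => hstep k
  have hP0 : ∑ k ∈ range n, max (v k) 0 = 0 :=
    le_antisymm (by nlinarith) (sum_nonneg fun k _ => le_max_right _ _)
  have hN0 : ∑ k ∈ range n, min (v k) 0 = 0 := by omega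
  have hk := mem_range.mpr (Nat.mod_lt k hn)
  have := (sum_eq_zero_iff_of_nonneg fun k _ => le_max_right (v k) 0).mp hP0 _ hk
  have := (sum_eq_zero_iff_of_nonpos fun k _ => min_le_right (v k) 0).mp hN0 _ hk
  rw [← hv.map_mod_nat k]
  omega

theorem Function.mem_of_iterate_mem_of_mapsTo {α : Type*} {f : α → α} {s : Set α}
    (hs : Set.MapsTo f s s) {x : α} (hx : x ∈ periodicPts f) {k : ℕ} (hk : f^[k] x ∈ s) :
    x ∈ s := by
  obtain ⟨n, hn, hxn⟩ := mem_periodicPts.mp hx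
  have hle : k ≤ n * k := Nat.le_mul_of_pos_left k hn
  rw [← (hxn.mul_const k).eq, ← Nat.sub_add_cancel hle, iterate_add_apply]
  exact hs.iterate _ hk

theorem padicValRat.prod {q : ℕ} [Fact q.Prime] {ι : Type*} (s : Finset ι) {f : ι → ℚ}
    (hf : ∀ i ∈ s, f i ≠ 0) : padicValRat q (∏ i ∈ s, f i) = ∑ i ∈ s, padicValRat q (f i) := by
  classical
  induction s using Finset.induction_on with
  | empty => simp
  | insert i s hi ih =>
    rw [prod_insert hi, sum_insert hi, padicValRat.mul (hf i (mem_insert_self i s))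
      (prod_ne_zero_iff.mpr fun j hj => hf j (mem_insert_of_mem hj)),
      ih fun j hj => hf j (mem_insert_of_mem hj)]

theorem Rat.eq_one_or_eq_neg_one_of_padicValRat_eq_zero {x : ℚ} (hx : x ≠ 0)
    (h : ∀ q : ℕ, q.Prime → padicValRat q x = 0) : x = 1 ∨ x = -1 := by
  have hcop := x.reduced
  have hden : x.den = 1 := by
    refine Nat.eq_one_iff_not_exists_prime_dvd.mpr fun q hq hqd => ?_
    have := Fact.mk hq
    have hnum : ¬ q ∣ x.num.natAbs := fun hqn =>
      hq.one_lt.ne' (Nat.dvd_one.mp (hcop ▸ Nat.dvd_gcd hqn hqd))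
    have := h q hq
    rw [padicValRat_def, padicValInt, padicValNat.eq_zero_of_not_dvd hnum] at this
    have := one_le_padicValNat_of_dvd x.den_nz hqd
    omega
  have hnum : x.num.natAbs = 1 := by
    refine Nat.eq_one_iff_not_exists_prime_dvd.mpr fun q hq hqn => ?_
    have := Fact.mk hq
    have := h q hq
    rw [padicValRat_def, padicValInt, hden, padicValNat_one_right] at this
    have := one_le_padicValNat_of_dvd (Int.natAbs_ne_zero.mpr (Rat.num_ne_zero.mpr hx)) hqn
    omega
  rw [← x.num_div_den, hden]
  rcases Int.natAbs_eq_iff.mp hnum with h1 | h1 <;> simp [h1]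

theorem Rat.eq_or_eq_neg_of_padicValRat_eq {x y : ℚ} (hx : x ≠ 0) (hy : y ≠ 0)
    (h : ∀ q : ℕ, q.Prime → padicValRat q x = padicValRat q y) : x = y ∨ x = -y := by
  have := eq_one_or_eq_neg_one_of_padicValRat_eq_zero (div_ne_zero hx hy) fun q hq => by
    have := Fact.mk hq
    rw [padicValRat.div hx hy, h q hq, sub_self]
  rcases this with h1 | h1
  · exact .inl ((div_eq_one_iff_eq hy).mp h1)
  · exact .inr (((div_eq_iff hy).mp h1).trans (neg_one_mul y))

theorem padicValRat.min_le_neg_mul_max {q : ℕ} [Fact q.Prime] {d : ℕ} (hd : 2 ≤ d) {b c : ℚ}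
    (hb : b ≠ 0) (hc : c ≠ 0) (hc' : (c - b) / c ^ d + b ≠ 0) (hbv : 0 ≤ padicValRat q b)
    (hcv : 0 < padicValRat q c → padicValRat q c ≠ padicValRat q b) :
    min (padicValRat q ((c - b) / c ^ d + b)) 0 ≤ -((d : ℤ) - 1) * max (padicValRat q c) 0 := by
  rcases le_or_gt (padicValRat q c) 0 with hv | hv
  · rw [max_eq_right hv, mul_zero]
    exact min_le_right _ _
  have hsub : c + -b ≠ 0 := fun h => hcv hv (by rw [← neg_neg b, ← add_eq_zero_iff_eq_neg.mp h])
  have hA : (c - b) / c ^ d ≠ 0 := div_ne_zero (by rwa [sub_eq_add_neg]) (pow_ne_zero d hc)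
  have hvsub : padicValRat q (c - b) ≤ padicValRat q c := by
    rw [sub_eq_add_neg, padicValRat.add_eq_min hsub hc (neg_ne_zero.mpr hb)
      (by rw [padicValRat.neg]; exact hcv hv)]
    exact min_le_left _ _
  have hvA : padicValRat q ((c - b) / c ^ d) ≤ -((d : ℤ) - 1) * padicValRat q c := by
    rw [padicValRat.div (by rwa [sub_eq_add_neg]) (pow_ne_zero d hc), padicValRat.pow]
    linarith
  have hlt : padicValRat q ((c - b) / c ^ d) < padicValRat q b := by
    have : (0 : ℤ) < ((d : ℤ) - 1) * padicValRat q c := mul_pos (by omega) hv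
    linarith
  rw [padicValRat.add_eq_of_lt hc' hA hb hlt, max_eq_left hv.le]
  exact (min_le_left _ _).trans hvA

theorem sign_mul_prime_pow_ne_zero {p : ℕ} (hp : p.Prime) {σ : ℚ} (hσ : σ = 1 ∨ σ = -1)
    (e : ℕ) : σ * p ^ e ≠ 0 :=
  mul_ne_zero (by rcases hσ with rfl | rfl <;> norm_num)
    (pow_ne_zero _ (Nat.cast_ne_zero.mpr hp.ne_zero))

theorem padicValRat.sign_mul {q : ℕ} {σ : ℚ} (hσ : σ = 1 ∨ σ = -1) (x : ℚ) :
    padicValRat q (σ * x) = padicValRat q x := by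
  rcases hσ with rfl | rfl <;> simp [padicValRat.neg]

theorem padicValRat.sign_mul_prime_pow {p : ℕ} (hp : p.Prime) {σ : ℚ} (hσ : σ = 1 ∨ σ = -1)
    (e : ℕ) : padicValRat p (σ * p ^ e) = e := by
  have := Fact.mk hp
  rw [padicValRat.sign_mul hσ, padicValRat.pow, padicValRat.self hp.one_lt, mul_one]

theorem padicValRat.sign_mul_prime_pow_of_ne {p q : ℕ} (hp : p.Prime) (hq : q.Prime)
    (hqp : q ≠ p) {σ : ℚ} (hσ : σ = 1 ∨ σ = -1) (e : ℕ) : padicValRat q (σ * p ^ e) = 0 := by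
  have := Fact.mk hp
  have := Fact.mk hq
  rw [padicValRat.sign_mul hσ, padicValRat.pow, padicValRat.of_nat, padicValNat_primes hqp,
    Nat.cast_zero, mul_zero]

theorem padicValRat.sign_mul_prime_pow_nonneg (p : ℕ) {q : ℕ} [Fact q.Prime] {σ : ℚ}
    (hσ : σ = 1 ∨ σ = -1) (e : ℕ) : 0 ≤ padicValRat q (σ * p ^ e) := by
  rw [padicValRat.sign_mul hσ, padicValRat.pow]
  exact mul_nonneg (Nat.cast_nonneg e) (zero_le_padicValRat_of_nat p)

theorem Int.exists_padicValInt_two_add_mul_pow_pos {p : ℕ} (hp : p.Prime) {k : ℕ} (hk : 3 ≤ k)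
    {s : ℤ} (hs : s = 1 ∨ s = -1) :
    ∃ q : ℕ, q.Prime ∧ q ≠ p ∧ 0 < padicValInt q (2 + s * p ^ k) := by
  set x : ℤ := 2 + s * p ^ k
  have hp2 : (2 : ℤ) ≤ p := by exact_mod_cast hp.two_le
  have hpk : (p : ℤ) ^ 3 ≤ p ^ k := pow_le_pow_right₀ (by omega) hk
  have hbig : p + 1 ≤ |x| := by
    have : (p : ℤ) * 4 ≤ p ^ 3 := by
      have : (4 : ℤ) ≤ p ^ 2 := by nlinarith
      nlinarith
    rw [le_abs]
    rcases hs with rfl | rfl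
    · left; simp only [x]; omega
    · right; simp only [x]; omega
  have hx0 : x.natAbs ≠ 0 := Int.natAbs_ne_zero.mpr (abs_pos.mp (by omega))
  -- otherwise `|x| = p ^ j`, too large for `j ≤ 1`, while `j ≥ 2` contradicts `x ≡ 2 [ZMOD p ^ 2]`
  by_contra! hall
  obtain ⟨j, hj⟩ : ∃ j, x.natAbs = p ^ j := ⟨_, Nat.eq_prime_pow_of_unique_prime_dvd hx0
    fun {q} hq hqx => by_contra fun hqp => by
      have := Fact.mk hq
      exact (hall q hq hqp).not_gt (one_le_padicValNat_of_dvd hx0 hqx)⟩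
  rcases Nat.lt_or_ge j 2 with hj2 | hj2
  · have : x.natAbs ≤ p :=
      hj ▸ (pow_le_pow_right₀ hp.one_lt.le (by omega : j ≤ 1)).trans (pow_one p).le
    have := Int.natCast_natAbs x
    omega
  · have hx : (p : ℤ) ^ 2 ∣ x := Int.natCast_dvd.mpr (hj ▸ pow_dvd_pow p hj2)
    have h2 : (p : ℤ) ^ 2 ∣ 2 := by
      have : (p : ℤ) ^ 2 ∣ s * p ^ k := Dvd.dvd.mul_left (pow_dvd_pow _ (by omega)) s
      simpa [x] using (Int.dvd_add_left this).mp hx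
    have := Int.le_of_dvd two_pos h2
    nlinarith

theorem exists_padicValRat_multiplier_neg_ne_zero {p : ℕ} (hp : p.Prime) {d : ℕ} (hd : 3 ≤ d)
    (hodd : Odd d) {σ : ℚ} (hσ : σ = 1 ∨ σ = -1) {e : ℕ} (he : 1 ≤ e) {b : ℚ}
    (hb : b = σ * p ^ e) :
    ∃ q : ℕ, q.Prime ∧ q ≠ p ∧ padicValRat q ((-b - b) / (-b) ^ d + b) ≠ 0 := by
  obtain ⟨s, hs, rfl⟩ : ∃ s : ℤ, (s = 1 ∨ s = -1) ∧ σ = s := by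
    rcases hσ with rfl | rfl
    exacts [⟨1, by simp⟩, ⟨-1, by simp⟩]
  obtain ⟨q, hq, hqp, hpos⟩ :=
    Int.exists_padicValInt_two_add_mul_pow_pos hp (le_trans hd (Nat.le_mul_of_pos_right d he)) hs
  have := Fact.mk hq
  refine ⟨q, hq, hqp, fun h => ?_⟩
  have hb0 : b ≠ 0 := hb ▸ sign_mul_prime_pow_ne_zero hp hσ e
  have hbd : b ^ d = s * p ^ (d * e) := by
    rw [hb, mul_pow, ← pow_mul, mul_comm e d]
    rcases hs with rfl | rfl
    · simp
    · simp [hodd.neg_one_pow]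
  set x : ℤ := 2 + s * p ^ (d * e)
  have hx0 : (x : ℚ) ≠ 0 := Int.cast_ne_zero.mpr fun h0 => by simp [h0] at hpos
  have hkey : (-b - b) / (-b) ^ d + b = x / b ^ (d - 1) := by
    have hx : (x : ℚ) = 2 + b ^ d := by rw [hbd]; push_cast [x]; ring
    rw [hodd.neg_pow, hx]
    obtain ⟨d', rfl⟩ : ∃ d', d = d' + 1 := ⟨d - 1, by omega⟩
    rw [Nat.add_sub_cancel, pow_succ]
    field_simp
    ring
  rw [hkey, padicValRat.div hx0 (pow_ne_zero _ hb0), padicValRat.of_int, padicValRat.pow, hb,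
    padicValRat.sign_mul_prime_pow_of_ne hp hq hqp hσ] at h
  omega

theorem padicValRat_multiplier_cycle_eq_zero {p : ℕ} (hp : p.Prime) {d : ℕ} (hd : 3 ≤ d) {σ : ℚ}
    (hσ : σ = 1 ∨ σ = -1) {e : ℕ} {b : ℚ} (hb : b = σ * p ^ e) {c : ℕ → ℚ} {n : ℕ} (hn : 0 < n)
    (hc : Periodic c n) (hc0 : ∀ k, c k ≠ 0) (hrec : ∀ k, c (k + 1) = (c k - b) / c k ^ d + b)
    (hprod : ∏ k ∈ range n, c k = 1) {q : ℕ} (hq : q.Prime)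
    (hcv : ∀ k, 0 < padicValRat q (c k) → padicValRat q (c k) ≠ padicValRat q b) (k : ℕ) :
    padicValRat q (c k) = 0 := by
  have := Fact.mk hq
  refine hc.comp (padicValRat q) |>.eq_zero_of_min_le_neg_mul_max hn ?_ (K := d - 1) (by omega)
    (fun k => ?_) k
  · change ∑ k ∈ range n, padicValRat q (c k) = 0
    rw [← padicValRat.prod _ fun k _ => hc0 k, hprod, padicValRat.one]
  · have := padicValRat.min_le_neg_mul_max (by omega) (hb ▸ sign_mul_prime_pow_ne_zero hp hσ e)
      (hc0 k) (hrec k ▸ hc0 (k + 1)) (hb ▸ padicValRat.sign_mul_prime_pow_nonneg p hσ e) (hcv k)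
    rwa [← hrec k] at this

theorem multiplier_cycle_zero_eq_one {p : ℕ} (hp : p.Prime) {d : ℕ} (hd : 3 ≤ d) (hodd : Odd d)
    {σ : ℚ} (hσ : σ = 1 ∨ σ = -1) {e : ℕ} {b : ℚ} (hb : b = σ * p ^ e) {c : ℕ → ℚ} {n : ℕ}
    (hn : 0 < n) (hc : Periodic c n) (hc0 : ∀ k, c k ≠ 0) (hcb : ∀ k, c k ≠ b)
    (hrec : ∀ k, c (k + 1) = (c k - b) / c k ^ d + b) (hprod : ∏ k ∈ range n, c k = 1) :
    c 0 = 1 := by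
  have hb0 : b ≠ 0 := hb ▸ sign_mul_prime_pow_ne_zero hp hσ e
  have hval := fun {q : ℕ} (hq : q.Prime) =>
    padicValRat_multiplier_cycle_eq_zero hp hd hσ hb hn hc hc0 hrec hprod hq
  have hoff : ∀ q, q.Prime → q ≠ p → ∀ k, padicValRat q (c k) = 0 := fun q hq hqp =>
    hval hq fun k hpos => by
      rw [hb, padicValRat.sign_mul_prime_pow_of_ne hp hq hqp hσ]
      exact hpos.ne'
  have hat : ∀ k, padicValRat p (c k) = 0 := hval hp fun k hpos heq => by
    have hbq : ∀ q, q.Prime → q ≠ p → padicValRat q b = 0 := fun q hq hqp =>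
      hb ▸ padicValRat.sign_mul_prime_pow_of_ne hp hq hqp hσ e
    rcases Rat.eq_or_eq_neg_of_padicValRat_eq (hc0 k) hb0 fun q hq =>
      if hqp : q = p then hqp ▸ heq else (hoff q hq hqp k).trans (hbq q hq hqp).symm with h | h
    · exact hcb k h
    · have he : 1 ≤ e := by
        rw [hb, padicValRat.sign_mul_prime_pow hp hσ] at heq
        omega
      obtain ⟨q, hq, hqp, hne⟩ := exists_padicValRat_multiplier_neg_ne_zero hp hd hodd hσ he hb
      exact hne (h ▸ hrec k ▸ hoff q hq hqp (k + 1))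
  have hpm : ∀ k, c k = 1 ∨ c k = -1 := fun k =>
    Rat.eq_or_eq_neg_of_padicValRat_eq (hc0 k) one_ne_zero fun q hq => by
      rw [padicValRat.one]
      exact if hqp : q = p then hqp ▸ hat k else hoff q hq hqp k
  refine (hpm 0).resolve_right fun h0 => ?_
  have h1 : c 1 = 1 + 2 * b := by rw [hrec, h0, hodd.neg_one_pow]; ring
  rcases hpm 1 with h | h
  · exact hb0 (by linarith)
  · exact hcb 0 (by linarith)

theorem periodic_affine_orbit_fixed {p : ℕ} (hp : p.Prime) {d : ℕ} (hd : 3 ≤ d) (hodd : Odd d)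
    {a : ℚ} (ha : a ≠ 0) {σ : ℚ} (hσ : σ = 1 ∨ σ = -1) {e : ℕ} {b : ℚ} (hb : b = σ * p ^ e)
    {w : ℕ → ℚ} {n : ℕ} (hn : 0 < n) (hw : Periodic w n) (hw0 : ∀ k, w k ≠ 0)
    (hc0 : ∀ k, a * w k ^ d + b ≠ 0) (hstep : ∀ k, w (k + 1) = w k / (a * w k ^ d + b)) :
    w 1 = w 0 := by
  set c : ℕ → ℚ := fun k => a * w k ^ d + b
  have hrec : ∀ k, c (k + 1) = (c k - b) / c k ^ d + b := fun k => by
    simp only [c, hstep k, div_pow, add_sub_cancel_right]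
    ring
  have hprod : ∏ k ∈ range n, c k = 1 := by
    have := prod_range_mul_eq_of_mul_succ (c := c) (z := w)
      (fun k => by rw [hstep k, mul_div_cancel₀ _ (hc0 k)]) n
    rwa [hw.eq, mul_eq_right₀ (hw0 0)] at this
  have hc1 : c 0 = 1 := multiplier_cycle_zero_eq_one hp hd hodd hσ hb hn
    (fun k => by simp only [c, hw k]) hc0
    (fun k h => mul_ne_zero ha (pow_ne_zero d (hw0 k)) (by simpa [c] using h)) hrec hprod
  rw [hstep, show a * w 0 ^ d + b = 1 from hc1, div_one]

theorem psi_some_zero {d : ℕ} (hd : d ≠ 0) (a : ℚ) {b : ℚ} (hb : b ≠ 0) :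
    psi d a b (some 0) = some 0 := by
  simp [psi, zero_pow hd, hb]

theorem eq_some_zero_of_iterate_psi_eq {d : ℕ} (hd : d ≠ 0) (a : ℚ) {b : ℚ} (hb : b ≠ 0)
    {P : Option ℚ} (hP : P ∈ periodicPts (psi d a b)) {k : ℕ} (hk : (psi d a b)^[k] P = some 0) :
    P = some 0 :=
  mem_of_iterate_mem_of_mapsTo (s := {some 0})
    (fun x hx => by rw [Set.mem_singleton_iff.mp hx, psi_some_zero hd a hb]; rfl) hP hk

theorem exists_iterate_psi_eq_some {d : ℕ} (hd : d ≠ 0) {a b : ℚ} (hb : b ≠ 0) {z : ℚ}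
    (hz : z ≠ 0) (hP : some z ∈ periodicPts (psi d a b)) (k : ℕ) :
    ∃ w, w ≠ 0 ∧ a * w ^ d + b ≠ 0 ∧ (psi d a b)^[k] (some z) = some w := by
  have hfix := fun {k : ℕ} hk =>
    hz (Option.some_inj.mp (eq_some_zero_of_iterate_psi_eq hd a hb hP (k := k) hk))
  rcases h : (psi d a b)^[k] (some z) with _ | w
  · exact (hfix (k := k + 1) (by rw [iterate_succ_apply', h]; rfl)).elim
  refine ⟨w, fun hw => hfix (hw ▸ h), fun hc => hfix (k := k + 2) ?_, rfl⟩
  rw [iterate_succ_apply', iterate_succ_apply', h, psi, if_pos hc]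
  rfl

/-- Fix a prime `p`, an odd integer `d ≥ 3`, a nonzero rational `a`,
and `b = σ·p^e` with `σ ∈ {1,−1}` and `e ≥ 0`. Then every rational periodic point of
`ψ_{d,a,b}` is a fixed point. -/
theorem periodic_implies_fixed_odd_degree
    (p : ℕ) (hp : p.Prime) (d : ℕ) (hd : 3 ≤ d) (hodd : Odd d)
    (a : ℚ) (ha : a ≠ 0) (σ : ℚ) (hσ : σ = 1 ∨ σ = -1) (e : ℕ)
    (b : ℚ) (hb : b = σ * (p : ℚ) ^ e)
    (P : Option ℚ) (hP : ∃ n : ℕ, 0 < n ∧ (psi d a b)^[n] P = P) :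
    psi d a b P = P := by
  obtain ⟨n, hn, hper⟩ := hP
  have hperiodic : P ∈ periodicPts (psi d a b) := mem_periodicPts.mpr ⟨n, hn, hper⟩
  have hd0 : d ≠ 0 := by omega
  have hb0 : b ≠ 0 := hb ▸ sign_mul_prime_pow_ne_zero hp hσ e
  rcases P with _ | z
  · exact absurd (eq_some_zero_of_iterate_psi_eq hd0 a hb0 hperiodic (k := 1) rfl) (by simp)
  by_cases hz : z = 0
  · rw [hz, psi_some_zero hd0 a hb0]
  choose w hw0 hc0 hwk using exists_iterate_psi_eq_some hd0 hb0 hz hperiodic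
  have hstep : ∀ k, w (k + 1) = w k / (a * w k ^ d + b) := fun k => by
    have := hwk (k + 1)
    rw [iterate_succ_apply', hwk k, psi, if_neg (hc0 k), Option.some_inj] at this
    exact this.symm
  have hw : Periodic w n := fun k => by
    rw [← Option.some_inj, ← hwk, ← hwk, iterate_add_apply, hper]
  have := periodic_affine_orbit_fixed hp hd hodd ha hσ hb hn hw hw0 hc0 hstep
  rw [← iterate_one (psi d a b), hwk, this, ← hwk, iterate_zero_apply]
end

section
/- Let p be a prime, d ≥ 3 an integer, and b = σ·p^e with σ ∈ {1, −1} and e ≥ 1 an integer. Then the polynomial b·w^d + w − b has no rational root. -/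
/-!
Write a root as `w = n / m` in lowest terms. Clearing denominators in `b w^d + w - b = 0`
gives `n m^(d-1) = b (m^d - n^d)`. Since `m^d - n^d` is coprime to both `n` and `m`, it divides
`n m^(d-1)` only if it is `±1`; but `x^d - y^d = ±1` with `d ≥ 2` forces `x = 0` or `y = 0`,
and `n = 0` would make `b = 0`.
-/

/-- `x - y` divides the unit `x^d - y^d`, so `|x| ≠ |y|`; and if `|x| > |y| ≥ 1` then
`|x^d - y^d| ≥ |x|^(d-1) (|x| - |y|) ≥ 2`. -/
theorem Int.eq_zero_or_eq_zero_of_isUnit_pow_sub_pow {x y : ℤ} {d : ℕ} (hd : 2 ≤ d)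
    (h : IsUnit (x ^ d - y ^ d)) : x = 0 ∨ y = 0 := by
  by_contra! ⟨hx, hy⟩
  have hxy : |x| ≠ |y| := by
    have := Int.isUnit_iff.mp (isUnit_of_dvd_unit (sub_dvd_pow_sub_pow x y d) h)
    rcases abs_cases x with ⟨_, _⟩ | ⟨_, _⟩ <;> rcases abs_cases y with ⟨_, _⟩ | ⟨_, _⟩ <;> omega
  wlog hlt : |y| < |x| generalizing x y
  · exact this (by simpa only [neg_sub] using h.neg) hy hx hxy.symm ((not_lt.mp hlt).lt_of_ne hxy)
  obtain ⟨k, rfl⟩ : ∃ k, d = k + 2 := ⟨d - 2, by omega⟩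
  have hgap : |x| ^ (k + 1) * (|x| - |y|) ≤ |x ^ (k + 2) - y ^ (k + 2)| := by
    have hpow : |y| ^ (k + 1) * |y| ≤ |x| ^ (k + 1) * |y| :=
      mul_le_mul_of_nonneg_right (pow_le_pow_left₀ (abs_nonneg y) hlt.le _) (abs_nonneg y)
    calc |x| ^ (k + 1) * (|x| - |y|) ≤ |x| ^ (k + 1) * |x| - |y| ^ (k + 1) * |y| := by linarith
      _ = |x ^ (k + 2)| - |y ^ (k + 2)| := by rw [abs_pow, abs_pow]; ring
      _ ≤ |x ^ (k + 2) - y ^ (k + 2)| := abs_sub_abs_le_abs_sub _ _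
  have hx2 : 2 ≤ |x| := by linarith [Int.one_le_abs hy]
  have hxpow : |x| ≤ |x| ^ (k + 1) := le_self_pow₀ (by linarith) (by omega)
  rw [Int.isUnit_iff_abs_eq.mp h] at hgap
  nlinarith

theorem IsCoprime.pow_sub_pow_mul_pow {R : Type*} [CommRing R] {n m : R} (hnm : IsCoprime n m)
    (k : ℕ) : IsCoprime (m ^ (k + 1) - n ^ (k + 1)) (n * m ^ k) := by
  refine IsCoprime.mul_right ?_ (IsCoprime.pow_right ?_)
  · rw [show m ^ (k + 1) - n ^ (k + 1) = m ^ (k + 1) + n * -n ^ k by ring]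
    exact hnm.symm.pow_left.add_mul_left_left _
  · rw [show m ^ (k + 1) - n ^ (k + 1) = -n ^ (k + 1) + m * m ^ k by ring]
    exact hnm.pow_left.neg_left.add_mul_left_left _

theorem mul_pow_eq_of_mul_div_pow_add_div_sub_eq_zero {K : Type*} [Field K] {B n m : K}
    (hm : m ≠ 0) {k : ℕ} (h : B * (n / m) ^ (k + 1) + n / m - B = 0) :
    n * m ^ k = B * (m ^ (k + 1) - n ^ (k + 1)) := by
  have hcleared : n * m ^ k - B * (m ^ (k + 1) - n ^ (k + 1))
      = m ^ (k + 1) * (B * (n / m) ^ (k + 1) + n / m - B) := by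
    rw [div_pow]
    field_simp
    ring
  rwa [h, mul_zero, sub_eq_zero] at hcleared

theorem Rat.intCast_mul_pow_add_sub_ne_zero {B : ℤ} (hB : B ≠ 0) {d : ℕ} (hd : 2 ≤ d) (w : ℚ) :
    B * w ^ d + w - B ≠ 0 := by
  intro hw
  obtain ⟨k, rfl⟩ : ∃ k, d = k + 1 := ⟨d - 1, by omega⟩
  obtain ⟨n, m, hm, hnm, rfl⟩ : ∃ n m : ℤ, m ≠ 0 ∧ IsCoprime n m ∧ w = n / m :=
    ⟨w.num, w.den, by simp, Rat.isCoprime_num_den w, by simp [Rat.num_div_den]⟩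
  have hcleared : n * m ^ k = B * (m ^ (k + 1) - n ^ (k + 1)) := by
    exact_mod_cast mul_pow_eq_of_mul_div_pow_add_div_sub_eq_zero (by exact_mod_cast hm) hw
  have hunit : IsUnit (m ^ (k + 1) - n ^ (k + 1)) :=
    (hnm.pow_sub_pow_mul_pow k).isUnit_of_dvd' dvd_rfl ⟨B, by rw [hcleared, mul_comm]⟩
  rcases Int.eq_zero_or_eq_zero_of_isUnit_pow_sub_pow hd hunit with hm0 | rfl
  · exact hm hm0
  · simp [hm, hB] at hcleared

theorem no_rational_root_b_poly_general
    (p : ℕ) (hp : p.Prime) (d : ℕ) (hd : 3 ≤ d)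
    (σ : ℚ) (hσ : σ = 1 ∨ σ = -1) (e : ℕ)
    (b : ℚ) (hb : b = σ * (p : ℚ) ^ e) :
    ∀ w : ℚ, b * w ^ d + w - b ≠ 0 := by
  obtain ⟨B, hB, rfl⟩ : ∃ B : ℤ, B ≠ 0 ∧ (B : ℚ) = b := by
    have hpe : (p : ℤ) ^ e ≠ 0 := pow_ne_zero e (by exact_mod_cast hp.ne_zero)
    rcases hσ with rfl | rfl
    · exact ⟨(p : ℤ) ^ e, hpe, by rw [hb]; push_cast; ring⟩
    · exact ⟨-(p : ℤ) ^ e, neg_ne_zero.mpr hpe, by rw [hb]; push_cast; ring⟩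
  exact Rat.intCast_mul_pow_add_sub_ne_zero hB (by omega)

/-- Let `p` be a prime, `d ≥ 3`, and `b = σ·p^e` with
`σ ∈ {1,−1}` and `e ≥ 1`. Then the polynomial `b·w^d + w − b` has no rational root. -/
theorem no_rational_root_b_poly
    (p : ℕ) (hp : p.Prime) (d : ℕ) (hd : 3 ≤ d)
    (σ : ℚ) (hσ : σ = 1 ∨ σ = -1) (e : ℕ) (he : 1 ≤ e)
    (b : ℚ) (hb : b = σ * (p : ℚ) ^ e) :
    ∀ w : ℚ, b * w ^ d + w - b ≠ 0 :=
  no_rational_root_b_poly_general p hp d hd σ hσ e b hb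
end

section
/- Let p be a prime, d ≥ 3 an integer, and b = σ·p^e with σ ∈ {1, −1} and e ≥ 1 an integer. Then the only rational root that the polynomial (b−1)·w^d + w − b can have is w = 1; that is, every w ∈ ℚ with (b−1)·w^d + w − b = 0 satisfies w = 1. -/
/-!
Write a root `w ≠ 1` in lowest terms as `r / s`. Clearing denominators and dividing by `r - s`
gives `(b - 1) * T = -s ^ (d - 1)` with `T = ∑ r ^ i * s ^ (d - 1 - i)`. Since `T ≡ r ^ (d - 1)`
modulo `s`, it is coprime to `s` and hence a unit, so `|r ^ d - s ^ d| = |r - s|`. For `d ≥ 3`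
this forces `s = 1` and `r ∈ {0, -1}`, and these are roots only when `b = 0`.
-/

open Finset

theorem IsCoprime.geom_sum₂_left {R : Type*} [CommRing R] {x y : R} (h : IsCoprime x y) (n : ℕ) :
    IsCoprime (∑ i ∈ range (n + 1), x ^ i * y ^ (n - i)) y := by
  rw [geom_sum₂_succ_eq]
  exact h.pow_left.add_mul_left_left _

theorem sub_one_mul_pow_add_mul_pow_sub_mul_pow {R : Type*} [CommRing R] (b x y : R) (n : ℕ) :
    (b - 1) * x ^ (n + 1) + x * y ^ n - b * y ^ (n + 1) =
      (x - y) * ((b - 1) * ∑ i ∈ range (n + 1), x ^ i * y ^ (n - i) + y ^ n) := by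
  have h := geom_sum₂_mul x y (n + 1)
  simp only [add_tsub_cancel_right] at h
  linear_combination (1 - b) * h

theorem Int.add_lt_pow_sub_pow {a b : ℤ} (hb : 0 ≤ b) (hba : b < a) (ha : 2 ≤ a) {d : ℕ}
    (hd : 3 ≤ d) : a + b < a ^ d - b ^ d := by
  obtain ⟨m, rfl⟩ : ∃ m, d = m + 1 := ⟨d - 1, by omega⟩
  have hbm : b ^ m ≤ a ^ m := pow_le_pow_left₀ hb hba.le m
  have ham : a ^ 2 ≤ a ^ m := pow_le_pow_right₀ (by omega) (by omega)
  have : 0 ≤ b ^ m := pow_nonneg hb m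
  rw [pow_succ, pow_succ]
  nlinarith

theorem Int.abs_sub_lt_abs_pow_sub_pow {x y : ℤ} (hxy : |y| < |x|) (hx : 2 ≤ |x|) {d : ℕ}
    (hd : 3 ≤ d) : |x - y| < |x ^ d - y ^ d| :=
  calc |x - y| ≤ |x| + |y| := abs_sub _ _
    _ < |x| ^ d - |y| ^ d := Int.add_lt_pow_sub_pow (abs_nonneg y) hxy hx hd
    _ ≤ |x ^ d - y ^ d| := by rw [← abs_pow, ← abs_pow]; exact abs_sub_abs_le_abs_sub _ _

theorem Int.eq_one_of_abs_pow_sub_pow_eq_abs_sub {r s : ℤ} (hrs : IsCoprime r s) (hs : 0 < s)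
    (hne : r ≠ s) {d : ℕ} (hd : 3 ≤ d) (h : |r ^ d - s ^ d| = |r - s|) :
    s = 1 ∧ (r = 0 ∨ r = -1) := by
  have hs' : |s| = s := abs_of_pos hs
  rcases lt_trichotomy |r| s with hlt | heq | hgt
  · have hs1 : s = 1 := by
      by_contra hs1
      have := Int.abs_sub_lt_abs_pow_sub_pow (x := s) (y := r) (by rwa [hs']) (by omega) hd
      rw [abs_sub_comm, abs_sub_comm (s ^ d)] at this
      omega
    exact ⟨hs1, Or.inl (abs_eq_zero.mp (by have := abs_nonneg r; omega))⟩
  · have hs1 : s = 1 := by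
      have := hrs.isUnit_of_dvd' (heq ▸ abs_dvd_self r) dvd_rfl
      rcases Int.isUnit_iff.mp this with h | h <;> omega
    refine ⟨hs1, Or.inr ?_⟩
    rcases abs_eq (zero_le_one' ℤ) |>.mp (heq.trans hs1) with h | h <;> omega
  · have := Int.abs_sub_lt_abs_pow_sub_pow (x := r) (y := s) (by rwa [hs']) (by omega) hd
    omega

theorem Int.eq_one_of_sub_one_mul_pow_add_mul_pow_sub_mul_pow_eq_zero {b r s : ℤ}
    (hrs : IsCoprime r s) (hs : 0 < s) (hne : r ≠ s) {n : ℕ} (hn : 2 ≤ n)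
    (h : (b - 1) * r ^ (n + 1) + r * s ^ n - b * s ^ (n + 1) = 0) :
    s = 1 ∧ (r = 0 ∨ r = -1) := by
  rw [sub_one_mul_pow_add_mul_pow_sub_mul_pow] at h
  have hT : (b - 1) * ∑ i ∈ Finset.range (n + 1), r ^ i * s ^ (n - i) + s ^ n = 0 :=
    (mul_eq_zero.mp h).resolve_left (sub_ne_zero.mpr hne)
  have hunit : IsUnit (∑ i ∈ Finset.range (n + 1), r ^ i * s ^ (n - i)) :=
    (hrs.geom_sum₂_left n).pow_right.isUnit_of_dvd' dvd_rfl
      ⟨-(b - 1), by linear_combination hT⟩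
  have hgeom := geom_sum₂_mul r s (n + 1)
  simp only [add_tsub_cancel_right] at hgeom
  refine Int.eq_one_of_abs_pow_sub_pow_eq_abs_sub hrs hs hne (by omega : 3 ≤ n + 1) ?_
  rw [← hgeom, abs_mul, Int.isUnit_iff_abs_eq.mp hunit, one_mul]

theorem Rat.eq_one_of_intCast_sub_one_mul_pow_add_sub_eq_zero {b : ℤ} (hb : b ≠ 0) {d : ℕ}
    (hd : 3 ≤ d) {w : ℚ} (h : ((b : ℚ) - 1) * w ^ d + w - b = 0) : w = 1 := by
  by_contra hw
  obtain ⟨n, rfl⟩ : ∃ n, d = n + 1 := ⟨d - 1, by omega⟩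
  have hden : (w.den : ℚ) ≠ 0 := by positivity
  have hcleared : (b - 1) * w.num ^ (n + 1) + w.num * (w.den : ℤ) ^ n
      - b * (w.den : ℤ) ^ (n + 1) = 0 := by
    have hmul : ((b : ℚ) - 1) * w.num ^ (n + 1) + w.num * (w.den : ℚ) ^ n
        - b * (w.den : ℚ) ^ (n + 1) = (((b : ℚ) - 1) * (w.num / w.den : ℚ) ^ (n + 1)
          + w.num / w.den - b) * (w.den : ℚ) ^ (n + 1) := by
      rw [div_pow]; field_simp; ring
    rw [Rat.num_div_den, h, zero_mul] at hmul
    exact_mod_cast hmul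
  have hne : w.num ≠ w.den := fun heq => hw (by rw [← Rat.num_div_den w, heq]; exact div_self hden)
  obtain ⟨hs1, hr⟩ := Int.eq_one_of_sub_one_mul_pow_add_mul_pow_sub_mul_pow_eq_zero
    (Rat.isCoprime_num_den w) (by exact_mod_cast w.den_pos) hne (by omega) hcleared
  have hwr : w = w.num := (Rat.coe_int_num_of_den_eq_one (by exact_mod_cast hs1)).symm
  apply hb
  suffices (b : ℚ) = 0 by exact_mod_cast this
  rcases hr with hr | hr <;> rw [hwr, hr] at h <;> push_cast at h
  · simpa using h
  · rcases neg_one_pow_eq_or ℚ (n + 1) with h1 | h1 <;> rw [h1] at h <;> linarith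

theorem rational_root_b_sub_one_poly_general
    (p : ℕ) (hp : p.Prime) (d : ℕ) (hd : 3 ≤ d)
    (σ : ℚ) (hσ : σ = 1 ∨ σ = -1) (e : ℕ)
    (b : ℚ) (hb : b = σ * (p : ℚ) ^ e) :
    ∀ w : ℚ, (b - 1) * w ^ d + w - b = 0 → w = 1 := by
  obtain ⟨B, rfl, hB⟩ : ∃ B : ℤ, (B : ℚ) = b ∧ B ≠ 0 := by
    have hpe : (p : ℤ) ^ e ≠ 0 := pow_ne_zero _ (by exact_mod_cast hp.ne_zero)
    rcases hσ with rfl | rfl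
    · exact ⟨p ^ e, by simp [hb], hpe⟩
    · exact ⟨-p ^ e, by simp [hb], neg_ne_zero.mpr hpe⟩
  exact fun w => Rat.eq_one_of_intCast_sub_one_mul_pow_add_sub_eq_zero hB hd

/-- Let `p` be a prime, `d ≥ 3`, and `b = σ·p^e` with
`σ ∈ {1,−1}` and `e ≥ 1`. Then the only possible rational root of the polynomial
`(b−1)·w^d + w − b` is `w = 1`. -/
theorem rational_root_b_sub_one_poly
    (p : ℕ) (hp : p.Prime) (d : ℕ) (hd : 3 ≤ d)
    (σ : ℚ) (hσ : σ = 1 ∨ σ = -1) (e : ℕ) (he : 1 ≤ e)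
    (b : ℚ) (hb : b = σ * (p : ℚ) ^ e) :
    ∀ w : ℚ, (b - 1) * w ^ d + w - b = 0 → w = 1 :=
  rational_root_b_sub_one_poly_general p hp d hd σ hσ e b hb
end

section
/- Let p be a prime, d ≥ 4 an even integer, and b = σ·p^e with σ ∈ {1, −1} and e ≥ 1 an integer. Then the only rational root that the polynomial (b+1)·w^d + w − b can have is w = −1; that is, every w ∈ ℚ with (b+1)·w^d + w − b = 0 satisfies w = −1. -/
/-!
Write `w = m / n` in lowest terms and `b = B = ±p^e`. Clearing denominators gives `m ∣ B`, and
after cancelling `m` the cofactor `q = B / m` satisfies `q n ≡ 1 (mod m)`, so `m` and `q` are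
coprime. As `m q = ±p^e`, one of them is a unit.
If `m = ±1`, then `m^d = 1` because `d` is even, and the equation `B (n^d - 1) = 1 + m n^(d-1)`
together with `|B| ≥ 2` forces `n = 1`, whence `m = -1`.
If `q = ±1`, the equation becomes `(m q + 1) m^(d-1) = n^(d-1) (q n - 1)`; coprimality of `m`
and `n` yields `|m|^(d-1) ≤ n + 1` and `n^(d-1) ≤ |m| + 1`, which is impossible for `|m| ≥ 2`
and `d ≥ 3`.
-/

theorem isUnit_or_isUnit_of_isCoprime_of_dvd_prime_pow {R : Type*} [CommSemiring R] [IsCancelMulZero R]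
    {p a b : R} (hp : Prime p) {e : ℕ} (ha : a ∣ p ^ e) (hb : b ∣ p ^ e) (hab : IsCoprime a b) :
    IsUnit a ∨ IsUnit b := by
  obtain ⟨i, -, hi⟩ := (dvd_prime_pow hp e).1 ha
  obtain ⟨j, -, hj⟩ := (dvd_prime_pow hp e).1 hb
  rcases Nat.eq_zero_or_pos i with rfl | hi0
  · exact .inl (hi.isUnit_iff.2 (pow_zero p ▸ isUnit_one))
  rcases Nat.eq_zero_or_pos j with rfl | hj0
  · exact .inr (hj.isUnit_iff.2 (pow_zero p ▸ isUnit_one))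
  exact (hp.not_isUnit (hab.isUnit_of_dvd' ((dvd_pow_self p hi0.ne').trans hi.symm.dvd)
    ((dvd_pow_self p hj0.ne').trans hj.symm.dvd))).elim

theorem num_den_eq_of_root {B : ℤ} {k : ℕ} {w : ℚ}
    (h : ((B : ℚ) + 1) * w ^ (k + 1) + w - B = 0) :
    (B + 1) * w.num ^ (k + 1) + w.num * (w.den : ℤ) ^ k = B * (w.den : ℤ) ^ (k + 1) := by
  have hw : w * w.den = w.num := Rat.mul_den_eq_num w
  have : ((B + 1) * w.num ^ (k + 1) + w.num * (w.den : ℤ) ^ k : ℚ) = B * w.den ^ (k + 1) := by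
    rw [← hw]
    linear_combination (w.den : ℚ) ^ (k + 1) * h
  exact_mod_cast this

section

/-! `(B + 1) m^(k+1) + m n^k = B n^(k+1)` is `(B + 1) w^(k+1) + w - B = 0` at `w = m / n` with
denominators cleared. -/

variable {m n q B : ℤ} {k : ℕ}

theorem num_dvd_of_root (hmn : IsCoprime m n)
    (h : (B + 1) * m ^ (k + 1) + m * n ^ k = B * n ^ (k + 1)) : m ∣ B := by
  have : m ∣ B * n ^ (k + 1) := by
    rw [← h]
    exact dvd_add ((dvd_pow_self m k.succ_ne_zero).mul_left _) (dvd_mul_right m _)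
  exact hmn.pow_right.dvd_of_dvd_mul_right this

theorem root_cofactor_eq (hm : m ≠ 0)
    (h : (m * q + 1) * m ^ (k + 1) + m * n ^ k = m * q * n ^ (k + 1)) :
    (m * q + 1) * m ^ k + n ^ k = q * n ^ (k + 1) :=
  mul_left_cancel₀ hm (by linear_combination h)

theorem isCoprime_of_root_cofactor (hmn : IsCoprime m n) (hk : k ≠ 0)
    (h : (m * q + 1) * m ^ k + n ^ k = q * n ^ (k + 1)) : IsCoprime m q := by
  have hdvd : m ∣ n ^ k * (1 - q * n) := by
    rw [show n ^ k * (1 - q * n) = -((m * q + 1) * m ^ k) by linear_combination h, dvd_neg]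
    exact (dvd_pow_self m hk).mul_left _
  obtain ⟨t, ht⟩ := hmn.pow_right.dvd_of_dvd_mul_left hdvd
  exact ⟨t, n, by linear_combination -ht⟩

theorem eq_neg_one_of_root_of_isUnit (hm : IsUnit m) (hn : 0 < n) (hB : 2 ≤ |B|) (hk : k ≠ 0)
    (heven : Even (k + 1)) (h : (B + 1) * m ^ (k + 1) + m * n ^ k = B * n ^ (k + 1)) :
    m = -1 ∧ n = 1 := by
  have habs : |m| = 1 := Int.isUnit_iff_abs_eq.1 hm
  rw [← heven.pow_abs, habs, one_pow, mul_one] at h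
  have hn1 : n = 1 := by
    by_contra hn1
    have hn2 : 2 ≤ n := by omega
    have hN : n ≤ n ^ k := le_self_pow₀ (by omega) hk
    have hbound : |B| * (n * n ^ k - 1) ≤ 1 + n ^ k :=
      calc |B| * (n * n ^ k - 1) = |B * (n * n ^ k - 1)| := by
            rw [abs_mul, abs_of_nonneg (a := n * n ^ k - 1) (by nlinarith)]
        _ = |1 + m * n ^ k| := by congr 1; linear_combination h.symm
        _ ≤ |1| + |m * n ^ k| := abs_add_le _ _
        _ = 1 + n ^ k := by rw [abs_mul, habs, abs_pow, abs_of_pos hn]; simp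
    nlinarith [mul_le_mul_of_nonneg_right hB (by nlinarith : (0 : ℤ) ≤ n * n ^ k - 1)]
  subst hn1
  simp only [one_pow, mul_one] at h
  exact ⟨by linarith, rfl⟩

theorem not_root_of_isUnit_cofactor (hmn : IsCoprime m n) (hq : IsUnit q) (hm : 2 ≤ |m|)
    (hn : 0 < n) (hk : 2 ≤ k) (h : (m * q + 1) * m ^ k + n ^ k = q * n ^ (k + 1)) : False := by
  have hq1 : |q| = 1 := Int.isUnit_iff_abs_eq.1 hq
  have hsplit : (m * q + 1) * m ^ k = n ^ k * (q * n - 1) := by linear_combination h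
  have hmq : m * q + 1 ≠ 0 := by
    intro h0
    have : |m * q| = 1 := by rw [show m * q = -1 by linarith]; rfl
    rw [abs_mul, hq1, mul_one] at this
    linarith
  have hqn : q * n - 1 ≠ 0 := by
    intro h0
    rw [h0, mul_zero] at hsplit
    exact mul_ne_zero hmq (pow_ne_zero k (abs_pos.1 (by linarith))) hsplit
  have hmk : |m| ^ k ≤ n + 1 :=
    calc |m| ^ k ≤ |q * n - 1| := Int.le_abs_of_dvd hqn <| by
          rw [← abs_pow, abs_dvd]
          exact hmn.pow.dvd_of_dvd_mul_left (Dvd.intro_left _ hsplit)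
      _ ≤ |q * n| + |1| := abs_sub _ _
      _ = n + 1 := by rw [abs_mul, hq1, abs_of_pos hn]; simp
  have hnk : n ^ k ≤ |m| + 1 :=
    calc n ^ k ≤ |m * q + 1| :=
          Int.le_abs_of_dvd hmq (hmn.symm.pow.dvd_of_dvd_mul_right (Dvd.intro _ hsplit.symm))
      _ ≤ |m * q| + |1| := abs_add_le _ _
      _ = |m| + 1 := by rw [abs_mul, hq1]; simp
  have hm2 : |m| ^ 2 ≤ |m| ^ k := pow_le_pow_right₀ (by linarith) hk
  have hn2 : n ^ 2 ≤ n ^ k := pow_le_pow_right₀ hn hk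
  rcases le_or_gt n |m| with hle | hlt <;> nlinarith

end

/-- Let `p` be a prime, `d ≥ 4` even, and `b = σ·p^e` with
`σ ∈ {1,−1}` and `e ≥ 1`. Then the only possible rational root of the polynomial
`(b+1)·w^d + w − b` is `w = −1`. -/
theorem rational_root_b_add_one_poly
    (p : ℕ) (hp : p.Prime) (d : ℕ) (hd : 4 ≤ d) (heven : Even d)
    (σ : ℚ) (hσ : σ = 1 ∨ σ = -1) (e : ℕ) (he : 1 ≤ e)
    (b : ℚ) (hb : b = σ * (p : ℚ) ^ e) :
    ∀ w : ℚ, (b + 1) * w ^ d + w - b = 0 → w = -1 := by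
  intro w hw
  obtain ⟨k, rfl⟩ : ∃ k, d = k + 1 := ⟨d - 1, by omega⟩
  obtain ⟨B, rfl, hB⟩ : ∃ B : ℤ, b = B ∧ |B| = (p : ℤ) ^ e := by
    rcases hσ with rfl | rfl
    · exact ⟨p ^ e, by simp [hb], abs_of_pos (by positivity [hp.pos])⟩
    · exact ⟨-p ^ e, by simp [hb], by rw [abs_neg, abs_of_pos (by positivity [hp.pos])]⟩
  have hB2 : 2 ≤ |B| := hB ▸ (by exact_mod_cast hp.two_le : (2 : ℤ) ≤ p).trans
    (le_self_pow₀ (by exact_mod_cast hp.one_le) (by omega))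
  have hmn := Rat.isCoprime_num_den w
  have hroot := num_den_eq_of_root hw
  obtain ⟨q, rfl⟩ := num_dvd_of_root hmn hroot
  have hm0 : w.num ≠ 0 := by rintro h0; simp [h0] at hB2
  have hred := root_cofactor_eq hm0 hroot
  have hdvd : w.num * q ∣ (p : ℤ) ^ e := by rw [← abs_dvd, hB]
  rcases isUnit_or_isUnit_of_isCoprime_of_dvd_prime_pow (Nat.prime_iff_prime_int.mp hp)
    (dvd_of_mul_right_dvd hdvd) (dvd_of_mul_left_dvd hdvd)
    (isCoprime_of_root_cofactor hmn (by omega) hred) with hm | hq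
  · obtain ⟨hnum, hden⟩ := eq_neg_one_of_root_of_isUnit hm (by exact_mod_cast w.den_pos) hB2
      (by omega) heven hroot
    rw [← Rat.num_div_den w, hnum, show w.den = 1 by exact_mod_cast hden]
    norm_num
  · rw [abs_mul, Int.isUnit_iff_abs_eq.1 hq, mul_one] at hB2
    exact (not_root_of_isUnit_cofactor hmn hq hB2 (by exact_mod_cast w.den_pos) (by omega)
      hred).elim
end

section
/- Let d ≥ 4 be an even integer, let a be a nonzero rational number, and let b = σ·p^e for a prime p, σ ∈ {1, −1}, and an integer e ≥ 0. Then there do not exist rational numbers α, β, γ simultaneously satisfying a·α^d + b = 1, a·γ^d + b = 0, and a·β^d + b = −1. (Equivalently, the three rational d-th powers β^d, γ^d, α^d cannot form an arithmetic progression with nonzero common difference 1/a.) -/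
/-!
Dividing by `γ ^ d`, the ratios `(α / γ) ^ d` and `(β / γ) ^ d` equal `(b - 1) / b` and
`(b + 1) / b`. For an integer `b = ±m` with `m > 0` these are `(m ∓ 1) / m` in lowest terms,
so `m - 1` and `m + 1` would be `d`-th powers of integers, hence squares differing by `2`,
which is impossible modulo `4`. For `b = 0`, `a * α ^ d = 1` and `a * β ^ d = -1` would have
opposite signs although `α ^ d, β ^ d ≥ 0`.
-/

theorem Int.sq_ne_sq_add_two (x y : ℤ) : x ^ 2 ≠ y ^ 2 + 2 := by
  intro h
  have hmod4 := congrArg (Int.cast : ℤ → ZMod 4) h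
  push_cast at hmod4
  generalize (x : ZMod 4) = s at hmod4
  generalize (y : ZMod 4) = t at hmod4
  revert s t
  decide

theorem Int.pow_ne_pow_add_two_of_even {d : ℕ} (hd : Even d) (x y : ℤ) :
    x ^ d ≠ y ^ d + 2 := by
  obtain ⟨k, rfl⟩ := hd
  simpa only [← two_mul, pow_mul'] using Int.sq_ne_sq_add_two (x ^ k) (y ^ k)

theorem Rat.num_pow_eq_of_pow_eq_div {q : ℚ} {d : ℕ} {m n : ℤ} (hn : 0 < n)
    (hmn : IsCoprime m n) (h : q ^ d = m / n) : q.num ^ d = m := by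
  rw [← Rat.num_pow, h]
  exact Rat.num_div_eq_of_coprime hn (Int.isCoprime_iff_gcd_eq_one.mp hmn)

theorem pow_div_pow_eq_of_mul_pow_add_eq {K : Type*} [Field K] {a b c x y : K} {d : ℕ}
    (hb : b ≠ 0) (hx : a * x ^ d + b = c) (hy : a * y ^ d + b = 0) :
    (x / y) ^ d = (b - c) / b := by
  have ha : a ≠ 0 := by
    rintro rfl
    rw [zero_mul, zero_add] at hy
    exact hb hy
  have hy' : y ^ d ≠ 0 := by
    intro h
    rw [h, mul_zero, zero_add] at hy
    exact hb hy
  rw [div_pow, div_eq_div_iff hy' hb]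
  apply mul_left_cancel₀ ha
  linear_combination b * hx - (b - c) * hy

theorem not_even_pow_eq_pred_div_and_succ_div {d : ℕ} (hd : Even d) {m : ℤ} (hm : 0 < m)
    (u v : ℚ) : ¬ (u ^ d = ↑(m - 1) / m ∧ v ^ d = ↑(m + 1) / m) := by
  rintro ⟨hu, hv⟩
  have hu' := Rat.num_pow_eq_of_pow_eq_div hm ⟨-1, 1, by ring⟩ hu
  have hv' := Rat.num_pow_eq_of_pow_eq_div hm ⟨1, -1, by ring⟩ hv
  exact Int.pow_ne_pow_add_two_of_even hd v.num u.num (by omega)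

theorem no_even_pow_progression_of_int {d : ℕ} (hd : Even d) (n : ℤ) (a α β γ : ℚ) :
    ¬ (a * α ^ d + n = 1 ∧ a * γ ^ d + n = 0 ∧ a * β ^ d + n = -1) := by
  rintro ⟨hα, hγ, hβ⟩
  rcases lt_trichotomy n 0 with hn | rfl | hn
  · have hn' : (n : ℚ) ≠ 0 := by exact_mod_cast hn.ne
    refine not_even_pow_eq_pred_div_and_succ_div hd (neg_pos.mpr hn) (β / γ) (α / γ) ⟨?_, ?_⟩
    · rw [pow_div_pow_eq_of_mul_pow_add_eq hn' hβ hγ, ← neg_div_neg_eq]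
      push_cast; ring
    · rw [pow_div_pow_eq_of_mul_pow_add_eq hn' hα hγ, ← neg_div_neg_eq]
      push_cast; ring
  · simp only [Int.cast_zero, add_zero] at hα hβ
    have hneg : (a * α ^ d) * (a * β ^ d) < 0 := by rw [hα, hβ]; norm_num
    have hnonneg : 0 ≤ (a * α ^ d) * (a * β ^ d) := by
      rw [mul_mul_mul_comm, ← mul_pow]
      exact mul_nonneg (mul_self_nonneg a) (hd.pow_nonneg _)
    exact hneg.not_ge hnonneg
  · have hn' : (n : ℚ) ≠ 0 := by exact_mod_cast hn.ne'
    refine not_even_pow_eq_pred_div_and_succ_div hd hn (α / γ) (β / γ) ⟨?_, ?_⟩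
    · rw [pow_div_pow_eq_of_mul_pow_add_eq hn' hα hγ]
      push_cast; ring
    · rw [pow_div_pow_eq_of_mul_pow_add_eq hn' hβ hγ]
      push_cast; ring

theorem no_dth_powers_in_progression_general
    (p : ℕ) (d : ℕ) (heven : Even d)
    (a : ℚ)
    (σ : ℚ) (hσ : σ = 1 ∨ σ = -1) (e : ℕ) (b : ℚ) (hb : b = σ * (p : ℚ) ^ e) :
    ¬ ∃ α β γ : ℚ, a * α ^ d + b = 1 ∧ a * γ ^ d + b = 0 ∧ a * β ^ d + b = -1 := by
  obtain ⟨n, rfl⟩ : ∃ n : ℤ, b = n := by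
    rcases hσ with rfl | rfl
    exacts [⟨p ^ e, by simp [hb]⟩, ⟨-p ^ e, by simp [hb]⟩]
  rintro ⟨α, β, γ, h⟩
  exact no_even_pow_progression_of_int heven n a α β γ h

/-- Let `d ≥ 4` be even, `a` a nonzero rational, and `b = σ·p^e`
with `p` prime, `σ ∈ {1,−1}`, `e ≥ 0`. Then there are no rationals `α, β, γ` with
`a·α^d + b = 1`, `a·γ^d + b = 0`, and `a·β^d + b = −1` (equivalently, the `d`-th
powers `β^d, γ^d, α^d` cannot form an arithmetic progression with common
difference `1/a ≠ 0`). -/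
theorem no_dth_powers_in_progression
    (p : ℕ) (hp : p.Prime) (d : ℕ) (hd : 4 ≤ d) (heven : Even d)
    (a : ℚ) (ha : a ≠ 0)
    (σ : ℚ) (hσ : σ = 1 ∨ σ = -1) (e : ℕ) (b : ℚ) (hb : b = σ * (p : ℚ) ^ e) :
    ¬ ∃ α β γ : ℚ, a * α ^ d + b = 1 ∧ a * γ ^ d + b = 0 ∧ a * β ^ d + b = -1 :=
  no_dth_powers_in_progression_general p d heven a σ hσ e b hb
end
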